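/- arXiv:2506.14193 — 9 statements merged into one kernel-verified Lean document; each statement's English description precedes it below -/
import Mathlib

section
/- Let (n, M, (v_j), (m_j)) be truncated-product data. Let z_0 be the unique positive solution of Σ_{j=0}^M ( 1/(n+v_j+z) − 1/(m_j+z) ) = 0 (with m_0 = 0), set ρ = ρ_{M,n} = ( (1/2) Σ_{j=0}^M ( 1/(m_j+z_0)² − 1/(n+v_j+z_0)² ) )^{−1/3} > 0, q_0 = z_0/ρ^{3/2}, λ_M = ∏_{j=0}^M (n+v_j+z_0)/(m_j+z_0), v_{M,n} = Σ_{j=0}^M log(n+v_j) − Σ_{j=1}^M log m_j − (3/2) log ρ − log λ_M, and define, for complex s with Re s > 0 (principal logarithms), f_{M,n}(s) = Σ_{j=0}^M ρ^{−3/2}(n+v_j)(1 + ρ^{3/2}s/(n+v_j)) log(1 + ρ^{3/2}s/(n+v_j)) − Σ_{j=1}^M ρ^{−3/2} m_j (1 + ρ^{3/2}s/m_j) log(1 + ρ^{3/2}s/m_j) − s log s + s·v_{M,n}. Then for every real x_0 > q_0: the function y ↦ Re f_{M,n}(x_0 + iy) has derivative < 0 for all y > 0 and derivative > 0 for all y <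 0; consequently it attains its strict global maximum on ℝ at y = 0. -/
open Complex Filter Finset

noncomputable section

/-- Truncated-product data. -/
def TruncatedData (M n : ℕ) (v m : ℕ → ℕ) : Prop :=
  0 < M ∧ 0 < n ∧ v 0 = 0 ∧ m 0 = 0 ∧
    (∀ j ∈ Finset.Icc 1 M, n + v j ≤ m j) ∧
    (n : ℤ) < ∑ j ∈ Finset.Icc 1 M, ((m j : ℤ) - (n : ℤ) - (v j : ℤ))

/-- The scaling parameter `ρ_{M,n}` built from the saddle point `z₀`. -/
def rhoAiry (M n : ℕ) (v m : ℕ → ℕ) (z0 : ℝ) : ℝ :=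
  ((1/2) * ∑ j ∈ Finset.range (M + 1),
      (1 / ((m j : ℝ) + z0) ^ 2 - 1 / ((n : ℝ) + (v j : ℝ) + z0) ^ 2)) ^ (-(1/3) : ℝ)

/-- `q₀ = z₀/ρ^{3/2}`. -/
def q0Airy (M n : ℕ) (v m : ℕ → ℕ) (z0 : ℝ) : ℝ :=
  z0 / rhoAiry M n v m z0 ^ ((3:ℝ)/2)

/-- The spectral parameter `λ_M`. -/
def lamAiry (M n : ℕ) (v m : ℕ → ℕ) (z0 : ℝ) : ℝ :=
  ∏ j ∈ Finset.range (M + 1), ((n : ℝ) + (v j : ℝ) + z0) / ((m j : ℝ) + z0)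

/-- The constant `v_{M,n}`. -/
def vMn (M n : ℕ) (v m : ℕ → ℕ) (z0 : ℝ) : ℝ :=
  ∑ j ∈ Finset.range (M + 1), Real.log ((n : ℝ) + (v j : ℝ)) -
    ∑ j ∈ Finset.Icc 1 M, Real.log (m j : ℝ) -
    (3/2) * Real.log (rhoAiry M n v m z0) - Real.log (lamAiry M n v m z0)

/-- The phase function `f_{M,n}(s)` (principal logarithms). -/
def fMn (M n : ℕ) (v m : ℕ → ℕ) (z0 : ℝ) (s : ℂ) : ℂ :=
  ∑ j ∈ Finset.range (M + 1),
      ((rhoAiry M n v m z0 ^ (-(3:ℝ)/2) * ((n : ℝ) + (v j : ℝ)) : ℝ) : ℂ) *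
        (1 + (rhoAiry M n v m z0 ^ ((3:ℝ)/2) : ℝ) * s / (((n : ℝ) + (v j : ℝ) : ℝ) : ℂ)) *
        Complex.log (1 + (rhoAiry M n v m z0 ^ ((3:ℝ)/2) : ℝ) * s /
          (((n : ℝ) + (v j : ℝ) : ℝ) : ℂ)) -
    ∑ j ∈ Finset.Icc 1 M,
      ((rhoAiry M n v m z0 ^ (-(3:ℝ)/2) * (m j : ℝ) : ℝ) : ℂ) *
        (1 + (rhoAiry M n v m z0 ^ ((3:ℝ)/2) : ℝ) * s / ((m j : ℝ) : ℂ)) *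
        Complex.log (1 + (rhoAiry M n v m z0 ^ ((3:ℝ)/2) : ℝ) * s / ((m j : ℝ) : ℂ)) -
    s * Complex.log s + s * ((vMn M n v m z0 : ℝ) : ℂ)


section Aux

lemma arg_eq_arctan' {z : ℂ} (hz : 0 < z.re) : z.arg = Real.arctan (z.im / z.re) := by
  have h := Complex.abs_arg_lt_pi_div_two_iff.mpr (Or.inl hz)
  rw [← Complex.tan_arg, Real.arctan_tan (neg_lt_of_abs_lt h) (lt_of_abs_lt h)]

-- recast of the linear factor
lemma lin_cast (α a : ℝ) (ha : a ≠ 0) (s : ℂ) :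
    (α : ℂ) * s / (a : ℂ) = ((α / a : ℝ) : ℂ) * s := by
  push_cast
  ring

lemma lin_re (α a : ℝ) (ha : a ≠ 0) (s : ℂ) :
    (1 + (α : ℂ) * s / (a : ℂ)).re = 1 + (α/a) * s.re := by
  rw [lin_cast α a ha s]
  simp [Complex.add_re, Complex.re_ofReal_mul]

lemma lin_im (α a : ℝ) (ha : a ≠ 0) (s : ℂ) :
    (1 + (α : ℂ) * s / (a : ℂ)).im = (α/a) * s.im := by
  rw [lin_cast α a ha s]
  simp [Complex.add_im, Complex.im_ofReal_mul]

lemma term_hasDerivAt (α a : ℝ) (hα : 0 < α) (ha : 0 < a) {s : ℂ} (hs : 0 < s.re) :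
    HasDerivAt (fun s : ℂ => ((α⁻¹ * a : ℝ) : ℂ) * (1 + (α : ℂ) * s / (a : ℂ)) *
      Complex.log (1 + (α : ℂ) * s / (a : ℂ)))
      (Complex.log (1 + (α : ℂ) * s / (a : ℂ)) + 1) s := by
  have hLre : 0 < (1 + (α : ℂ) * s / (a : ℂ)).re := by
    rw [lin_re α a ha.ne' s]
    have : 0 < (α/a) * s.re := by positivity
    linarith
  have hL0 : (1 + (α : ℂ) * s / (a : ℂ)) ≠ 0 := by
    intro h
    rw [h] at hLre
    simp at hLre
  have hslit : (1 + (α : ℂ) * s / (a : ℂ)) ∈ Complex.slitPlane := Or.inl hLre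
  have h1 : HasDerivAt (fun z : ℂ => 1 + (α:ℂ)*z/(a:ℂ)) ((α:ℂ)/(a:ℂ)) s := by
    simpa using (((hasDerivAt_id s).const_mul ((α:ℂ))).div_const ((a:ℂ))).const_add 1
  have hlog : HasDerivAt (fun z : ℂ => Complex.log (1 + (α:ℂ)*z/(a:ℂ)))
      ((1 + (α : ℂ) * s / (a : ℂ))⁻¹ * ((α:ℂ)/(a:ℂ))) s := by
    exact (Complex.hasDerivAt_log hslit).comp s h1
  have hC : HasDerivAt (fun z : ℂ => ((α⁻¹ * a : ℝ) : ℂ) * (1 + (α:ℂ)*z/(a:ℂ)))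
      (((α⁻¹ * a : ℝ) : ℂ) * ((α:ℂ)/(a:ℂ))) s := h1.const_mul _
  have hprod := hC.mul hlog
  refine hprod.congr_deriv ?_
  have haC : (a:ℂ) ≠ 0 := by exact_mod_cast ha.ne'
  have hαC : (α:ℂ) ≠ 0 := by exact_mod_cast hα.ne'
  have hCa : ((α⁻¹*a : ℝ):ℂ) * ((α:ℂ)/(a:ℂ)) = 1 := by
    push_cast
    field_simp
  rw [show ((α⁻¹*a : ℝ):ℂ) * (1+(α:ℂ)*s/(a:ℂ)) * ((1+(α:ℂ)*s/(a:ℂ))⁻¹ * ((α:ℂ)/(a:ℂ)))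
      = (((α⁻¹*a : ℝ):ℂ) * ((α:ℂ)/(a:ℂ))) * ((1+(α:ℂ)*s/(a:ℂ)) * (1+(α:ℂ)*s/(a:ℂ))⁻¹) from by
        ring,
    mul_inv_cancel₀ hL0, hCa]
  ring

lemma arg_lin (α a x0 y : ℝ) (hα : 0 < α) (ha : 0 < a) (hx0 : 0 < x0) :
    (1 + (α:ℂ) * ((x0:ℂ)+(y:ℂ)*I) / (a:ℂ)).arg = Real.arctan (α*y/(a+α*x0)) := by
  have hsre : ((x0:ℂ)+(y:ℂ)*I).re = x0 := by simp
  have hsim : ((x0:ℂ)+(y:ℂ)*I).im = y := by simp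
  have hre : (1 + (α:ℂ) * ((x0:ℂ)+(y:ℂ)*I) / (a:ℂ)).re = 1 + (α/a) * x0 := by
    rw [lin_re α a ha.ne', hsre]
  have him : (1 + (α:ℂ) * ((x0:ℂ)+(y:ℂ)*I) / (a:ℂ)).im = (α/a) * y := by
    rw [lin_im α a ha.ne', hsim]
  have hrepos : 0 < (1 + (α:ℂ) * ((x0:ℂ)+(y:ℂ)*I) / (a:ℂ)).re := by
    rw [hre]
    have : 0 < (α/a)*x0 := by positivity
    linarith
  rw [arg_eq_arctan' hrepos, hre, him]
  congr 1
  have h1 : (0:ℝ) < a + α*x0 := by positivity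
  field_simp

-- derivative of u ↦ Real.arctan (t/u) - K/(u-δ)
lemma hasDerivAt_H (t K δ : ℝ) (ht : 0 < t) {u : ℝ} (hu : δ < u) (hδ : 0 < δ) :
    HasDerivAt (fun u : ℝ => Real.arctan (t/u) - K/(u-δ))
      ((K - t*(u-δ)^2/(u^2+t^2))/(u-δ)^2) u := by
  have hu0 : (0:ℝ) < u := hδ.trans hu
  have huδ : u - δ ≠ 0 := by linarith [hu]
  have h1 : HasDerivAt (fun u : ℝ => t/u) (t * (-(u^2)⁻¹)) u :=
    (hasDerivAt_inv hu0.ne').const_mul t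
  have h2 : HasDerivAt (fun u : ℝ => Real.arctan (t/u))
      (1/(1+(t/u)^2) * (t * (-(u^2)⁻¹))) u :=
    (Real.hasDerivAt_arctan (t/u)).comp u h1
  have h3 : HasDerivAt (fun u : ℝ => u - δ) 1 u := (hasDerivAt_id u).sub_const δ
  have h4 : HasDerivAt (fun u : ℝ => K/(u-δ)) (K * (-(((u-δ)^2)⁻¹) * 1)) u := by
    have := ((hasDerivAt_inv huδ).comp u h3).const_mul K
    simpa [div_eq_mul_inv] using this
  have h5 := h2.sub h4
  refine h5.congr_deriv ?_
  have hd : u^2 + t^2 ≠ 0 := by positivity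
  field_simp
  ring

lemma hasDerivAt_r (t δ : ℝ) (ht : 0 < t) (u : ℝ) :
    HasDerivAt (fun u : ℝ => t*(u-δ)^2/(u^2+t^2))
      (2*t*(u-δ)*(t^2+u*δ)/(u^2+t^2)^2) u := by
  have hd : u^2 + t^2 ≠ 0 := by positivity
  have h1 : HasDerivAt (fun u : ℝ => t*(u-δ)^2) (t*(2*(u-δ))) u := by
    simpa using (((hasDerivAt_id u).sub_const δ).pow 2).const_mul t
  have h2 : HasDerivAt (fun u : ℝ => u^2+t^2) (2*u) u := by
    simpa using ((hasDerivAt_id u).pow 2).add_const (t^2)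
  have h3 := h1.div h2 hd
  refine h3.congr_deriv ?_
  field_simp
  ring

lemma r_strictMonoOn (t δ : ℝ) (ht : 0 < t) (hδ : 0 < δ) :
    StrictMonoOn (fun u : ℝ => t*(u-δ)^2/(u^2+t^2)) (Set.Ici δ) := by
  apply strictMonoOn_of_deriv_pos (convex_Ici δ)
  · exact fun u _ => ((hasDerivAt_r t δ ht u).continuousAt).continuousWithinAt
  · intro u hu
    rw [interior_Ici] at hu
    rw [(hasDerivAt_r t δ ht u).deriv]
    have h1 : 0 < u - δ := by simpa using sub_pos.mpr (Set.mem_Ioi.mp hu)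
    have h2 : 0 < t^2 + u*δ := by
      have : 0 < u := hδ.trans (Set.mem_Ioi.mp hu)
      positivity
    positivity


lemma core_pos (M n : ℕ) (v m : ℕ → ℕ) (hdata : TruncatedData M n v m)
    (z0 : ℝ) (hz0pos : 0 < z0)
    (hz0 : ∑ j ∈ Finset.range (M + 1),
        (1 / ((n : ℝ) + (v j : ℝ) + z0) - 1 / ((m j : ℝ) + z0)) = 0)
    (X t : ℝ) (hX : z0 < X) (ht : 0 < t) :
    0 < ∑ j ∈ Finset.range (M + 1),
      (Real.arctan (t / ((n : ℝ) + (v j : ℝ) + X)) - Real.arctan (t / ((m j : ℝ) + X))) := by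
  obtain ⟨hM, hn, hv0, hm0, hm, hsum⟩ := hdata
  have hn1 : (1:ℝ) ≤ (n:ℝ) := by exact_mod_cast hn
  set δ : ℝ := X - z0 with hδdef
  have hδ : 0 < δ := by simp [hδdef]; linarith
  set r : ℝ → ℝ := fun u => t*(u-δ)^2/(u^2+t^2) with hrdef
  set K : ℝ := r ((n:ℝ) + X) with hKdef
  set H : ℝ → ℝ := fun u => Real.arctan (t/u) - K/(u-δ) with hHdef
  have hrmono := r_strictMonoOn t δ ht hδ
  have hXδ : δ < X := by linarith
  have hnX : X < (n:ℝ) + X := by linarith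
  -- H strictly mono on [X, n+X]
  have hHmono : StrictMonoOn H (Set.Icc X ((n:ℝ)+X)) := by
    apply strictMonoOn_of_deriv_pos (convex_Icc _ _)
    · intro u hu
      exact ((hasDerivAt_H t K δ ht (lt_of_lt_of_le hXδ hu.1) hδ).continuousAt).continuousWithinAt
    · intro u hu
      rw [interior_Icc] at hu
      have huδ : δ < u := hXδ.trans hu.1
      rw [(hasDerivAt_H t K δ ht huδ hδ).deriv]
      have hru : r u < K := by
        rw [hKdef]
        exact hrmono (Set.mem_Ici.mpr huδ.le) (Set.mem_Ici.mpr (by linarith)) hu.2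
      have h1 : 0 < u - δ := sub_pos.mpr huδ
      have h2 : 0 < K - r u := sub_pos.mpr hru
      rw [hrdef] at h2
      positivity
  -- H antitone on [n+X, ∞)
  have hHanti : AntitoneOn H (Set.Ici ((n:ℝ)+X)) := by
    have hδnX : δ < (n:ℝ)+X := by linarith
    apply antitoneOn_of_deriv_nonpos (convex_Ici _)
    · intro u hu
      exact ((hasDerivAt_H t K δ ht (lt_of_lt_of_le hδnX hu) hδ).continuousAt).continuousWithinAt
    · intro u hu
      rw [interior_Ici] at hu
      exact ((hasDerivAt_H t K δ ht (hδnX.trans hu) hδ).differentiableAt).differentiableWithinAt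
    · intro u hu
      rw [interior_Ici] at hu
      have huδ : δ < u := hδnX.trans hu
      rw [(hasDerivAt_H t K δ ht huδ hδ).deriv]
      have hru : K ≤ r u := by
        rw [hKdef]
        exact le_of_lt (hrmono (Set.mem_Ici.mpr hδnX.le) (Set.mem_Ici.mpr huδ.le) hu)
      have h1 : 0 < u - δ := sub_pos.mpr huδ
      apply div_nonpos_of_nonpos_of_nonneg (by linarith) (by positivity)
  -- rewrite each summand
  have hkey : ∀ j ∈ Finset.range (M+1),
      Real.arctan (t / ((n : ℝ) + (v j : ℝ) + X)) - Real.arctan (t / ((m j : ℝ) + X))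
      = (H ((n:ℝ) + (v j:ℝ) + X) - H ((m j:ℝ) + X))
        + K * (1 / ((n : ℝ) + (v j : ℝ) + z0) - 1 / ((m j : ℝ) + z0)) := by
    intro j _
    rw [hHdef]
    have e1 : (n:ℝ) + (v j:ℝ) + X - δ = (n:ℝ) + (v j:ℝ) + z0 := by rw [hδdef]; ring
    have e2 : (m j:ℝ) + X - δ = (m j:ℝ) + z0 := by rw [hδdef]; ring
    simp only [e1, e2]
    ring
  rw [Finset.sum_congr rfl hkey, Finset.sum_add_distrib, ← Finset.mul_sum, hz0, mul_zero,
    add_zero]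
  -- positivity of the H-difference sum
  apply Finset.sum_pos'
  · intro j hj
    rcases Nat.eq_zero_or_pos j with h0 | hjpos
    · subst h0
      simp only [hv0, hm0, Nat.cast_zero, add_zero, zero_add]
      have := hHmono (Set.mem_Icc.mpr ⟨le_refl X, by linarith⟩)
        (Set.mem_Icc.mpr ⟨by linarith, le_refl _⟩) hnX
      linarith
    · have hjmem : j ∈ Finset.Icc 1 M := by
        rw [Finset.mem_range] at hj; rw [Finset.mem_Icc]; omega
      have hvnn : (0:ℝ) ≤ (v j:ℝ) := by positivity
      have hmj : (n:ℝ) + (v j:ℝ) ≤ (m j:ℝ) := by exact_mod_cast hm j hjmem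
      have := hHanti (Set.mem_Ici.mpr (by linarith : (n:ℝ)+X ≤ (n:ℝ)+(v j:ℝ)+X))
        (Set.mem_Ici.mpr (by linarith : (n:ℝ)+X ≤ (m j:ℝ)+X)) (by linarith)
      linarith
  · refine ⟨0, Finset.mem_range.mpr (by omega), ?_⟩
    simp only [hv0, hm0, Nat.cast_zero, add_zero, zero_add]
    have := hHmono (Set.mem_Icc.mpr ⟨le_refl X, by linarith⟩)
      (Set.mem_Icc.mpr ⟨by linarith, le_refl _⟩) hnX
    linarith

lemma B_pos (M n : ℕ) (v m : ℕ → ℕ) (hdata : TruncatedData M n v m)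
    (z0 : ℝ) (hz0pos : 0 < z0)
    (hz0 : ∑ j ∈ Finset.range (M + 1),
        (1 / ((n : ℝ) + (v j : ℝ) + z0) - 1 / ((m j : ℝ) + z0)) = 0) :
    0 < (1/2) * ∑ j ∈ Finset.range (M + 1),
      (1 / ((m j : ℝ) + z0) ^ 2 - 1 / ((n : ℝ) + (v j : ℝ) + z0) ^ 2) := by
  obtain ⟨hM, hn, hv0, hm0, hm, hsum⟩ := hdata
  have hn1 : (1:ℝ) ≤ (n:ℝ) := by exact_mod_cast hn
  have hnz : (0:ℝ) < (n:ℝ) + z0 := by linarith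
  have hkey : ∀ j ∈ Finset.range (M+1),
      1 / ((m j : ℝ) + z0) ^ 2 - 1 / ((n : ℝ) + (v j : ℝ) + z0) ^ 2
      = (1 / ((m j : ℝ) + z0) ^ 2 - 1 / ((n : ℝ) + (v j : ℝ) + z0) ^ 2
          + (2/((n:ℝ)+z0)) * (1 / ((n : ℝ) + (v j : ℝ) + z0) - 1 / ((m j : ℝ) + z0)))
        - (2/((n:ℝ)+z0)) * (1 / ((n : ℝ) + (v j : ℝ) + z0) - 1 / ((m j : ℝ) + z0)) := by
    intro j _; ring
  rw [Finset.sum_congr rfl hkey, Finset.sum_sub_distrib, ← Finset.mul_sum, hz0, mul_zero,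
    sub_zero]
  have hpos : 0 < ∑ j ∈ Finset.range (M+1),
      (1 / ((m j : ℝ) + z0) ^ 2 - 1 / ((n : ℝ) + (v j : ℝ) + z0) ^ 2
        + (2/((n:ℝ)+z0)) * (1 / ((n : ℝ) + (v j : ℝ) + z0) - 1 / ((m j : ℝ) + z0))) := by
    apply Finset.sum_pos'
    · intro j hj
      rcases Nat.eq_zero_or_pos j with h0 | hjpos
      · subst h0
        simp only [hv0, hm0, Nat.cast_zero, add_zero, zero_add]
        have he : 1 / z0 ^ 2 - 1 / ((n:ℝ) + z0) ^ 2
            + (2/((n:ℝ)+z0)) * (1 / ((n:ℝ) + z0) - 1 / z0)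
            = (1/z0 - 1/((n:ℝ)+z0))^2 := by
          field_simp
          ring
        rw [he]; positivity
      · have hjmem : j ∈ Finset.Icc 1 M := by
          rw [Finset.mem_range] at hj; rw [Finset.mem_Icc]; omega
        have hvnn : (0:ℝ) ≤ (v j:ℝ) := by positivity
        have hmj : (n:ℝ) + (v j:ℝ) ≤ (m j:ℝ) := by exact_mod_cast hm j hjmem
        have hb : (0:ℝ) < (n:ℝ) + (v j:ℝ) + z0 := by linarith
        have hc : (0:ℝ) < (m j:ℝ) + z0 := by linarith
        have hd : 0 ≤ 1 / ((n:ℝ) + (v j:ℝ) + z0) - 1 / ((m j:ℝ) + z0) := by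
          rw [sub_nonneg]
          apply one_div_le_one_div_of_le hb (by linarith)
        have he : 1 / ((m j : ℝ) + z0) ^ 2 - 1 / ((n : ℝ) + (v j : ℝ) + z0) ^ 2
            + (2/((n:ℝ)+z0)) * (1 / ((n : ℝ) + (v j : ℝ) + z0) - 1 / ((m j : ℝ) + z0))
            = (1 / ((n : ℝ) + (v j : ℝ) + z0) - 1 / ((m j : ℝ) + z0))
              * (2/((n:ℝ)+z0) - (1 / ((n : ℝ) + (v j : ℝ) + z0) + 1 / ((m j : ℝ) + z0))) := by
          field_simp
          ring
        rw [he]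
        apply mul_nonneg hd
        have h1 : 1 / ((n:ℝ) + (v j:ℝ) + z0) ≤ 1/((n:ℝ)+z0) :=
          one_div_le_one_div_of_le hnz (by linarith)
        have h2 : 1 / ((m j:ℝ) + z0) ≤ 1/((n:ℝ)+z0) :=
          one_div_le_one_div_of_le hnz (by linarith)
        have : 2/((n:ℝ)+z0) = 1/((n:ℝ)+z0) + 1/((n:ℝ)+z0) := by ring
        linarith
    · refine ⟨0, Finset.mem_range.mpr (by omega), ?_⟩
      simp only [hv0, hm0, Nat.cast_zero, add_zero, zero_add]
      have he : 1 / z0 ^ 2 - 1 / ((n:ℝ) + z0) ^ 2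
          + (2/((n:ℝ)+z0)) * (1 / ((n:ℝ) + z0) - 1 / z0)
          = (1/z0 - 1/((n:ℝ)+z0))^2 := by
        field_simp
        ring
      rw [he]
      have hne : 1/z0 - 1/((n:ℝ)+z0) ≠ 0 := by
        have : 1/((n:ℝ)+z0) < 1/z0 := one_div_lt_one_div_of_lt hz0pos (by linarith)
        linarith
      positivity
  linarith

lemma hasDerivAt_refMn (M n : ℕ) (v m : ℕ → ℕ) (hdata : TruncatedData M n v m)
    (z0 : ℝ) (hρ : 0 < rhoAiry M n v m z0) (x0 : ℝ) (hx0 : 0 < x0) (y : ℝ) :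
    HasDerivAt (fun y : ℝ => (fMn M n v m z0 ((x0 : ℂ) + (y : ℂ) * I)).re)
      (-(∑ j ∈ Finset.range (M+1),
            Real.arctan (rhoAiry M n v m z0 ^ ((3:ℝ)/2) * y /
              ((n:ℝ) + (v j:ℝ) + rhoAiry M n v m z0 ^ ((3:ℝ)/2) * x0))
         - ∑ j ∈ Finset.Icc 1 M,
            Real.arctan (rhoAiry M n v m z0 ^ ((3:ℝ)/2) * y /
              ((m j:ℝ) + rhoAiry M n v m z0 ^ ((3:ℝ)/2) * x0))
         - Real.arctan (y / x0))) y := by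
  obtain ⟨hM, hn, hv0, hm0, hm, hsum⟩ := hdata
  set ρ : ℝ := rhoAiry M n v m z0 with hρdef
  set α : ℝ := ρ ^ ((3:ℝ)/2) with hαdef
  have hα : 0 < α := Real.rpow_pos_of_pos hρ _
  have hcoef : ρ ^ (-(3:ℝ)/2) = α⁻¹ := by
    rw [show (-(3:ℝ)/2) = -((3:ℝ)/2) by norm_num, Real.rpow_neg hρ.le]
  set s : ℂ := (x0:ℂ) + (y:ℂ)*I with hsdef
  have hsre : s.re = x0 := by simp [hsdef]
  have hspos : 0 < s.re := by rw [hsre]; exact hx0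
  have hsim : s.im = y := by simp [hsdef]
  have hslit : s ∈ Complex.slitPlane := Or.inl hspos
  have hsne : s ≠ 0 := by
    intro h; rw [h] at hspos; simp at hspos
  have hapos : ∀ j : ℕ, (0:ℝ) < (n:ℝ) + (v j:ℝ) := by
    intro j
    have : (1:ℝ) ≤ (n:ℝ) := by exact_mod_cast hn
    have : (0:ℝ) ≤ (v j:ℝ) := by positivity
    linarith
  have hmpos : ∀ j ∈ Finset.Icc 1 M, (0:ℝ) < (m j:ℝ) := by
    intro j hj
    have h1 := hm j hj
    have : (1:ℝ) ≤ (n:ℝ) := by exact_mod_cast hn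
    have h2 : (n:ℝ) + (v j:ℝ) ≤ (m j:ℝ) := by exact_mod_cast h1
    have : (0:ℝ) ≤ (v j:ℝ) := by positivity
    linarith
  set F : ℂ := (∑ j ∈ Finset.range (M+1),
        (Complex.log (1 + (α:ℂ)*s/((((n:ℝ)+(v j:ℝ)):ℝ):ℂ)) + 1))
      - (∑ j ∈ Finset.Icc 1 M, (Complex.log (1 + (α:ℂ)*s/(((m j:ℝ)):ℂ)) + 1))
      - (Complex.log s + 1) + (((vMn M n v m z0):ℝ):ℂ) with hFdef
  have hf : HasDerivAt (fMn M n v m z0) F s := by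
    unfold fMn
    rw [hFdef]
    simp only [← hρdef, hcoef, ← hαdef]
    apply HasDerivAt.add
    apply HasDerivAt.sub
    apply HasDerivAt.sub
    · exact HasDerivAt.fun_sum fun j hj => term_hasDerivAt α _ hα (hapos j) hspos
    · exact HasDerivAt.fun_sum fun j hj => term_hasDerivAt α _ hα (hmpos j hj) hspos
    · have := (hasDerivAt_id s).mul (Complex.hasDerivAt_log hslit)
      refine this.congr_deriv ?_
      simp only [id_eq, one_mul, mul_inv_cancel₀ hsne]
    · exact hasDerivAt_mul_const _
  have hpath : HasDerivAt (fun y : ℝ => (x0:ℂ) + (y:ℂ)*I) I y := by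
    have h : HasDerivAt (fun y : ℝ => ((y:ℝ):ℂ)) 1 y := Complex.ofRealCLM.hasDerivAt
    simpa using (h.mul_const I).const_add (x0:ℂ)
  have hcomp : HasDerivAt (fun y : ℝ => fMn M n v m z0 ((x0:ℂ)+(y:ℂ)*I)) (I • F) y := by
    simpa [Function.comp_def] using HasDerivAt.scomp y hf hpath
  have hre : HasDerivAt (fun y : ℝ => (fMn M n v m z0 ((x0:ℂ)+(y:ℂ)*I)).re)
      ((I • F).re) y := by
    simpa [Function.comp_def] using Complex.reCLM.hasFDerivAt.comp_hasDerivAt y hcomp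
  convert hre using 1
  rw [smul_eq_mul]
  rw [show (I * F).re = -F.im by simp [Complex.mul_re]]
  congr 1
  rw [hFdef]
  simp only [Complex.add_im, Complex.sub_im, Complex.im_sum, Complex.log_im,
    Complex.one_im, Complex.ofReal_im, add_zero]
  congr 1
  congr 1
  · exact Finset.sum_congr rfl fun j hj => by
      rw [hsdef, arg_lin α _ x0 y hα (hapos j) hx0]
  · exact Finset.sum_congr rfl fun j hj => by
      rw [hsdef, arg_lin α _ x0 y hα (hmpos j hj) hx0]
  · rw [arg_eq_arctan' hspos, hsim, hsre]

end Aux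

/-- **Lemma 2.3.** For `x₀ > q₀`, `Re f_{M,n}(x₀+iy)` strictly decreases for `y > 0`,
strictly increases for `y < 0`, and attains its strict global maximum at `y = 0`. -/

theorem Re_fMn_max_on_vertical_line
    (M n : ℕ) (v m : ℕ → ℕ)
    (hdata : TruncatedData M n v m)
    (z0 : ℝ) (hz0pos : 0 < z0)
    (hz0 : ∑ j ∈ Finset.range (M + 1),
        (1 / ((n : ℝ) + (v j : ℝ) + z0) - 1 / ((m j : ℝ) + z0)) = 0) :
    ∀ x0 : ℝ, q0Airy M n v m z0 < x0 →
      (∀ y : ℝ, 0 < y →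
        deriv (fun y : ℝ => (fMn M n v m z0 ((x0 : ℂ) + (y : ℂ) * I)).re) y < 0) ∧
      (∀ y : ℝ, y < 0 →
        0 < deriv (fun y : ℝ => (fMn M n v m z0 ((x0 : ℂ) + (y : ℂ) * I)).re) y) ∧
      (∀ y : ℝ, y ≠ 0 →
        (fMn M n v m z0 ((x0 : ℂ) + (y : ℂ) * I)).re < (fMn M n v m z0 (x0 : ℂ)).re) := by
  intro x0 hx0q
  have hB := B_pos M n v m hdata z0 hz0pos hz0
  have hρ : 0 < rhoAiry M n v m z0 := Real.rpow_pos_of_pos hB _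
  set α : ℝ := rhoAiry M n v m z0 ^ ((3:ℝ)/2) with hαdef
  have hα : 0 < α := Real.rpow_pos_of_pos hρ _
  have hq0 : q0Airy M n v m z0 = z0 / α := rfl
  have hx0 : 0 < x0 := lt_trans (by rw [hq0]; positivity) hx0q
  have hX : z0 < α * x0 := by
    rw [hq0, div_lt_iff₀ hα] at hx0q
    linarith [mul_comm x0 α, hx0q]
  set g : ℝ → ℝ := fun y : ℝ => (fMn M n v m z0 ((x0 : ℂ) + (y : ℂ) * I)).re with hgdef
  set S : ℝ → ℝ := fun t =>
      ∑ j ∈ Finset.range (M+1), Real.arctan (t / ((n:ℝ) + (v j:ℝ) + α * x0))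
      - ∑ j ∈ Finset.Icc 1 M, Real.arctan (t / ((m j:ℝ) + α * x0))
      - Real.arctan (t / (α * x0)) with hSdef
  have hS : ∀ t : ℝ, 0 < t → 0 < S t := by
    intro t ht
    have hcore := core_pos M n v m hdata z0 hz0pos hz0 (α * x0) t hX ht
    have hsplit : Finset.range (M+1) = insert 0 (Finset.Icc 1 M) := by
      ext j; simp only [Finset.mem_range, Finset.mem_insert, Finset.mem_Icc]; omega
    have h0 : (0:ℕ) ∉ Finset.Icc 1 M := by simp
    rw [Finset.sum_sub_distrib] at hcore
    have hC : ∑ j ∈ Finset.range (M+1), Real.arctan (t / ((m j:ℝ) + α * x0))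
        = Real.arctan (t / (α * x0))
          + ∑ j ∈ Finset.Icc 1 M, Real.arctan (t / ((m j:ℝ) + α * x0)) := by
      rw [hsplit, Finset.sum_insert h0, hdata.2.2.2.1]
      norm_num
    rw [hC] at hcore
    simp only [hSdef]
    linarith
  have hodd : ∀ t : ℝ, S (-t) = - S t := by
    intro t
    simp only [hSdef, neg_div, Real.arctan_neg, Finset.sum_neg_distrib]
    ring
  have hd : ∀ y : ℝ, HasDerivAt g (-(S (α * y))) y := by
    intro y
    have h := hasDerivAt_refMn M n v m hdata z0 hρ x0 hx0 y
    convert h using 2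
    simp only [hSdef, ← hαdef]
    have e1 : ∀ j : ℕ, α * y / ((n:ℝ) + (v j:ℝ) + α * x0)
        = α * y / ((n:ℝ) + (v j:ℝ) + α * x0) := fun _ => rfl
    rw [mul_div_mul_left y x0 hα.ne']
  have hdne : ∀ y : ℝ, 0 < y → deriv g y < 0 := by
    intro y hy
    rw [(hd y).deriv]
    have := hS (α * y) (mul_pos hα hy)
    linarith
  have hdpos : ∀ y : ℝ, y < 0 → 0 < deriv g y := by
    intro y hy
    rw [(hd y).deriv]
    have h1 : S (α * y) = - S (α * (-y)) := by
      rw [← hodd]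
      congr 1
      ring
    have h2 := hS (α * (-y)) (mul_pos hα (neg_pos.mpr hy))
    rw [h1]
    linarith
  refine ⟨hdne, hdpos, ?_⟩
  have hcont : Continuous g :=
    continuous_iff_continuousAt.mpr fun y => (hd y).differentiableAt.continuousAt
  have hanti : StrictAntiOn g (Set.Ici 0) := by
    apply strictAntiOn_of_deriv_neg (convex_Ici 0) hcont.continuousOn
    intro y hy
    rw [interior_Ici] at hy
    exact hdne y hy
  have hmono : StrictMonoOn g (Set.Iic 0) := by
    apply strictMonoOn_of_deriv_pos (convex_Iic 0) hcont.continuousOn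
    intro y hy
    rw [interior_Iic] at hy
    exact hdpos y hy
  intro y hy
  have hg0 : g 0 = (fMn M n v m z0 (x0 : ℂ)).re := by
    simp only [hgdef]
    norm_num
  rw [← hg0]
  rcases lt_or_gt_of_ne hy with h | h
  · exact hmono (Set.mem_Iic.mpr h.le) (Set.mem_Iic.mpr le_rfl) h
  · exact hanti (Set.mem_Ici.mpr le_rfl) (Set.mem_Ici.mpr h.le) h
end
end

section
/- Let n, M be positive integers, v_0 = 0 and v_1,…,v_M nonnegative integers, and m_1,…,m_M positive integers with m_j ≥ n + v_j for every 1 ≤ j ≤ M and Σ_{j=1}^M (m_j − n − v_j) > n; set m_0 = 0. Then the equation Σ_{j=0}^M ( 1/(n+v_j+z) − 1/(m_j+z) ) = 0 has exactly one solution z_0 in (0,∞). Moreover, the left-hand side is strictly negative for 0 < z < z_0 and strictly positive for z > z_0, and Σ_{j=0}^M ( 1/(m_j+z_0)² − 1/(n+v_j+z_0)² ) > 0. -/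
open Finset

noncomputable section

lemma aux_q_mono (n a b z1 z2 : ℝ) (hn : 0 < n) (ha : n ≤ a) (hb : n ≤ b)
    (h1 : 0 < z1) (h12 : z1 ≤ z2) :
    z1*(n+z1)/((a+z1)*(b+z1)) ≤ z2*(n+z2)/((a+z2)*(b+z2)) := by
  obtain ⟨p, hp, rfl⟩ : ∃ p, 0 ≤ p ∧ a = n + p := ⟨a - n, by linarith, by ring⟩
  obtain ⟨q, hq, rfl⟩ : ∃ q, 0 ≤ q ∧ b = n + q := ⟨b - n, by linarith, by ring⟩
  obtain ⟨t, ht, rfl⟩ : ∃ t, 0 ≤ t ∧ z2 = z1 + t := ⟨z2 - z1, by linarith, by ring⟩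
  have h2 : 0 < z1 + t := by linarith
  have p1 : 0 < (n+p+z1)*(n+q+z1) := by positivity
  have p2 : 0 < (n+p+(z1+t))*(n+q+(z1+t)) := by positivity
  rw [div_le_div_iff₀ p1 p2]
  nlinarith [(mul_nonneg (mul_nonneg (mul_nonneg h1.le h1.le) hp) ht),
    (mul_nonneg (mul_nonneg (mul_nonneg h1.le h1.le) hq) ht),
    (mul_nonneg (mul_nonneg (mul_nonneg h1.le hp) hq) ht),
    (mul_nonneg (mul_nonneg (mul_nonneg h1.le hp) ht) ht),
    (mul_nonneg (mul_nonneg (mul_nonneg h1.le hq) ht) ht),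
    (mul_nonneg (mul_nonneg (mul_nonneg hn.le h1.le) h1.le) ht),
    (mul_nonneg (mul_nonneg (mul_nonneg hn.le h1.le) hp) ht),
    (mul_nonneg (mul_nonneg (mul_nonneg hn.le h1.le) hq) ht),
    (mul_nonneg (mul_nonneg (mul_nonneg hn.le h1.le) ht) ht),
    (mul_nonneg (mul_nonneg (mul_nonneg hn.le hn.le) h1.le) ht),
    (mul_nonneg (mul_nonneg (mul_nonneg hn.le hn.le) hn.le) ht),
    (mul_nonneg (mul_nonneg (mul_nonneg hn.le hn.le) hp) ht),
    (mul_nonneg (mul_nonneg (mul_nonneg hn.le hn.le) hq) ht),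
    (mul_nonneg (mul_nonneg (mul_nonneg hn.le hn.le) ht) ht),
    (mul_nonneg (mul_nonneg (mul_nonneg hn.le hp) hq) ht),
    (mul_nonneg (mul_nonneg (mul_nonneg hn.le hp) ht) ht),
    (mul_nonneg (mul_nonneg (mul_nonneg hn.le hq) ht) ht),
    (mul_nonneg (mul_nonneg (mul_nonneg hp hq) ht) ht)]

lemma aux_q_mono_strict (n a b z1 z2 : ℝ) (hn : 0 < n) (ha : n ≤ a) (hb : n ≤ b)
    (h1 : 0 < z1) (h12 : z1 < z2) :
    z1*(n+z1)/((a+z1)*(b+z1)) < z2*(n+z2)/((a+z2)*(b+z2)) := by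
  have h2 : 0 < z2 := lt_trans h1 h12
  have p1 : 0 < (a+z1)*(b+z1) := by nlinarith
  have p2 : 0 < (a+z2)*(b+z2) := by nlinarith
  rw [div_lt_div_iff₀ p1 p2]
  nlinarith [mul_nonneg (sub_nonneg.2 h12.le) (mul_nonneg (sub_nonneg.2 ha) (sub_nonneg.2 hb)),
    mul_nonneg (mul_nonneg (sub_nonneg.2 h12.le) h1.le) (sub_nonneg.2 ha),
    mul_nonneg (mul_nonneg (sub_nonneg.2 h12.le) h1.le) (sub_nonneg.2 hb),
    mul_nonneg (mul_nonneg (sub_nonneg.2 h12.le) h2.le) (sub_nonneg.2 ha),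
    mul_nonneg (mul_nonneg (sub_nonneg.2 h12.le) h2.le) (sub_nonneg.2 hb),
    mul_pos h1 h2, mul_pos (sub_pos.2 h12) hn,
    mul_nonneg (mul_nonneg (sub_nonneg.2 h12.le) hn.le) (sub_nonneg.2 ha),
    mul_nonneg (mul_nonneg (sub_nonneg.2 h12.le) hn.le) (sub_nonneg.2 hb),
    mul_pos (mul_pos (sub_pos.2 h12) hn) h1, mul_pos (mul_pos (sub_pos.2 h12) hn) h2]

lemma aux_q_lb (n a b z : ℝ) (hn : 0 ≤ n) (ha : 0 ≤ a) (hb : 0 ≤ b) (hz : 0 < z) :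
    1 - (a+b)/z ≤ z*(n+z)/((a+z)*(b+z)) := by
  have p : 0 < (a+z)*(b+z) := by positivity
  rw [show (1 : ℝ) - (a+b)/z = (z - (a+b))/z by field_simp]
  rw [div_le_div_iff₀ hz p]
  nlinarith [mul_nonneg (mul_nonneg ha hb) (add_nonneg ha hb),
    mul_nonneg (mul_nonneg ha ha) hz.le, mul_nonneg (mul_nonneg ha hb) hz.le,
    mul_nonneg (mul_nonneg hb hb) hz.le, mul_nonneg hn (mul_pos hz hz).le]

lemma aux_q_ub (n a b z : ℝ) (hn : 0 < n) (ha : n ≤ a) (hb : n ≤ b) (hz : 0 < z) :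
    z*(n+z)/((a+z)*(b+z)) ≤ z*(n+z)/(n*n) := by
  apply div_le_div_of_nonneg_left (by positivity) (by positivity)
  nlinarith

lemma aux_head (n z : ℝ) (hn : 0 < n) (hz : 0 < z) :
    2/(n+z) * (1/z - 1/(n+z)) < 1/z^2 - 1/(n+z)^2 := by
  have h1 : 0 < n + z := by linarith
  have e : 1/z^2 - 1/(n+z)^2 - 2/(n+z) * (1/z - 1/(n+z)) = n^2/(z^2*(n+z)^2) := by
    field_simp; ring
  nlinarith [e, show (0:ℝ) < n^2/(z^2*(n+z)^2) by positivity]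

lemma aux_tail (n a b z : ℝ) (hn : 0 < n) (ha : n ≤ a) (hb : a ≤ b) (hz : 0 < z) :
    2/(n+z) * (1/(b+z) - 1/(a+z)) ≤ 1/(b+z)^2 - 1/(a+z)^2 := by
  have hnz : 0 < n + z := by linarith
  have haz : 0 < a + z := by linarith
  have hbz : 0 < b + z := by linarith
  have e : 1/(b+z)^2 - 1/(a+z)^2 - 2/(n+z) * (1/(b+z) - 1/(a+z))
      = (1/(a+z) - 1/(b+z)) * (2/(n+z) - (1/(a+z) + 1/(b+z))) := by
    field_simp; ring
  have f1 : 0 ≤ 1/(a+z) - 1/(b+z) := by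
    have := one_div_le_one_div_of_le haz (by linarith : a + z ≤ b + z); linarith
  have f2 : 1/(a+z) ≤ 1/(n+z) := one_div_le_one_div_of_le hnz (by linarith)
  have f3 : 1/(b+z) ≤ 1/(n+z) := one_div_le_one_div_of_le hnz (by linarith)
  have f4 : 1/(a+z) + 1/(b+z) ≤ 2/(n+z) := by
    rw [show (2:ℝ)/(n+z) = 1/(n+z) + 1/(n+z) by ring]; exact add_le_add f2 f3
  nlinarith [mul_nonneg f1 (by linarith : (0:ℝ) ≤ 2/(n+z) - (1/(a+z) + 1/(b+z)))]

lemma aux_term_eq (a b z : ℝ) (ha : 0 < a + z) (hb : 0 < b + z) :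
    1/(a+z) - 1/(b+z) = (b-a)/((a+z)*(b+z)) := by
  field_simp; ring

lemma aux_head0 (n z : ℝ) (hn : 0 < n) (hz : 0 < z) :
    z*(n+z) * (1/(n+z) - 1/z) = -n := by
  field_simp; ring

/-- **Existence and uniqueness of the saddle point `z₀`.** -/
theorem exists_unique_saddle_point
    (M n : ℕ) (hM : 0 < M) (hn : 0 < n)
    (v m : ℕ → ℕ) (hv0 : v 0 = 0) (hm0 : m 0 = 0)
    (hm : ∀ j ∈ Finset.Icc 1 M, 0 < m j ∧ n + v j ≤ m j)
    (hsum : (n : ℤ) < ∑ j ∈ Finset.Icc 1 M, ((m j : ℤ) - (n : ℤ) - (v j : ℤ))) :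
    ∃ z0 : ℝ, 0 < z0 ∧
      (∑ j ∈ Finset.range (M + 1),
          (1 / ((n : ℝ) + (v j : ℝ) + z0) - 1 / ((m j : ℝ) + z0)) = 0) ∧
      (∀ z : ℝ, 0 < z →
        (∑ j ∈ Finset.range (M + 1),
            (1 / ((n : ℝ) + (v j : ℝ) + z) - 1 / ((m j : ℝ) + z)) = 0) → z = z0) ∧
      (∀ z : ℝ, 0 < z → z < z0 →
        ∑ j ∈ Finset.range (M + 1),
          (1 / ((n : ℝ) + (v j : ℝ) + z) - 1 / ((m j : ℝ) + z)) < 0) ∧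
      (∀ z : ℝ, z0 < z →
        0 < ∑ j ∈ Finset.range (M + 1),
          (1 / ((n : ℝ) + (v j : ℝ) + z) - 1 / ((m j : ℝ) + z))) ∧
      0 < ∑ j ∈ Finset.range (M + 1),
        (1 / ((m j : ℝ) + z0) ^ 2 - 1 / ((n : ℝ) + (v j : ℝ) + z0) ^ 2) := by
  have hnR : (0:ℝ) < (n:ℝ) := by exact_mod_cast hn
  have hmR : ∀ j ∈ Finset.Icc 1 M, (n:ℝ) + (v j:ℝ) ≤ (m j:ℝ) := by
    intro j hj; exact_mod_cast (hm j hj).2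
  have haR : ∀ j : ℕ, (n:ℝ) ≤ (n:ℝ) + (v j:ℝ) := by
    intro j; have : (0:ℝ) ≤ (v j:ℝ) := Nat.cast_nonneg _; linarith
  have hbR : ∀ j ∈ Finset.Icc 1 M, (n:ℝ) ≤ (m j:ℝ) := fun j hj => le_trans (haR j) (hmR j hj)
  have hset : Finset.range (M+1) = insert 0 (Finset.Icc 1 M) := by
    ext j; simp only [Finset.mem_range, Finset.mem_insert, Finset.mem_Icc]; omega
  have h0 : 0 ∉ Finset.Icc 1 M := by simp
  -- d_j and S, K
  set d : ℕ → ℝ := fun j => (m j:ℝ) - ((n:ℝ) + (v j:ℝ)) with hd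
  have hdnn : ∀ j ∈ Finset.Icc 1 M, 0 ≤ d j := fun j hj => sub_nonneg.2 (hmR j hj)
  set S : ℝ := ∑ j ∈ Finset.Icc 1 M, d j with hS
  have hSn : (n:ℝ) < S := by
    have : ((∑ j ∈ Finset.Icc 1 M, ((m j:ℤ) - (n:ℤ) - (v j:ℤ)) : ℤ) : ℝ) = S := by
      push_cast [hS, hd]; apply Finset.sum_congr rfl; intro j _; ring
    rw [← this]; exact_mod_cast hsum
  have hSpos : 0 < S := lt_trans hnR hSn
  -- the auxiliary function g
  set q : ℕ → ℝ → ℝ := fun j z => z*((n:ℝ)+z)/((((n:ℝ)+(v j:ℝ))+z)*((m j:ℝ)+z)) with hq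
  set g : ℝ → ℝ := fun z => -(n:ℝ) + ∑ j ∈ Finset.Icc 1 M, d j * q j z with hg
  -- g z = z (n+z) f z
  have hgf : ∀ z : ℝ, 0 < z →
      g z = z*((n:ℝ)+z) * ∑ j ∈ Finset.range (M+1),
        (1/((n:ℝ)+(v j:ℝ)+z) - 1/((m j:ℝ)+z)) := by
    intro z hz
    rw [hset, Finset.sum_insert h0, mul_add, Finset.mul_sum]
    have hhead : z*((n:ℝ)+z) * (1/((n:ℝ)+(v 0:ℝ)+z) - 1/((m 0:ℝ)+z)) = -(n:ℝ) := by
      rw [hv0, hm0]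
      push_cast
      rw [add_zero, zero_add]
      exact aux_head0 (n:ℝ) z hnR hz
    rw [hhead]
    simp only [hg, hd, hq]
    congr 1
    apply Finset.sum_congr rfl
    intro j hj
    have haz : 0 < ((n:ℝ)+(v j:ℝ)) + z := by have := haR j; linarith
    have hbz : 0 < (m j:ℝ) + z := by have := hbR j hj; linarith
    have e := aux_term_eq ((n:ℝ)+(v j:ℝ)) (m j:ℝ) z haz hbz
    rw [show (1/((n:ℝ)+(v j:ℝ)+z) - 1/((m j:ℝ)+z))
        = ((m j:ℝ) - ((n:ℝ)+(v j:ℝ)))/((((n:ℝ)+(v j:ℝ))+z)*((m j:ℝ)+z)) from e]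
    field_simp
  -- g is strictly increasing on (0, ∞)
  have hgmono : ∀ z1 z2 : ℝ, 0 < z1 → z1 < z2 → g z1 < g z2 := by
    intro z1 z2 h1 h12
    have hle : ∀ j ∈ Finset.Icc 1 M, d j * q j z1 ≤ d j * q j z2 := by
      intro j hj
      exact mul_le_mul_of_nonneg_left
        (aux_q_mono (n:ℝ) ((n:ℝ)+(v j:ℝ)) (m j:ℝ) z1 z2 hnR (haR j) (hbR j hj) h1 h12.le)
        (hdnn j hj)
    have hex : ∃ j ∈ Finset.Icc 1 M, d j * q j z1 < d j * q j z2 := by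
      have hx : ∃ j ∈ Finset.Icc 1 M, (0:ℤ) < (m j:ℤ) - (n:ℤ) - (v j:ℤ) := by
        have h0le : (0:ℤ) = ∑ j ∈ Finset.Icc 1 M, (0:ℤ) := by simp
        have := Finset.exists_lt_of_sum_lt (f := fun _ => (0:ℤ))
          (g := fun j => (m j:ℤ) - (n:ℤ) - (v j:ℤ)) (s := Finset.Icc 1 M)
          (by rw [Finset.sum_const_zero]; exact lt_trans (by exact_mod_cast hn) hsum)
        exact this
      obtain ⟨j, hj, hdj⟩ := hx
      refine ⟨j, hj, ?_⟩
      have hdjR : 0 < d j := by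
        have hdj' : (0:ℝ) < (m j:ℝ) - (n:ℝ) - (v j:ℝ) := by exact_mod_cast hdj
        simp only [hd]; linarith
      exact mul_lt_mul_of_pos_left
        (aux_q_mono_strict (n:ℝ) ((n:ℝ)+(v j:ℝ)) (m j:ℝ) z1 z2 hnR (haR j) (hbR j hj) h1 h12)
        hdjR
    have := Finset.sum_lt_sum hle hex
    simp only [hg]
    linarith
  -- small point ε with g ε < 0
  set ε : ℝ := min 1 ((n:ℝ)^3/(2*S*((n:ℝ)+1))) with hε
  have hεpos : 0 < ε := lt_min one_pos (by positivity)
  have hε1 : ε ≤ 1 := min_le_left _ _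
  have hε2 : ε ≤ (n:ℝ)^3/(2*S*((n:ℝ)+1)) := min_le_right _ _
  have hgε : g ε < 0 := by
    have hub : ∀ j ∈ Finset.Icc 1 M, d j * q j ε ≤ d j * (ε*((n:ℝ)+ε)/((n:ℝ)*(n:ℝ))) := by
      intro j hj
      exact mul_le_mul_of_nonneg_left
        (aux_q_ub (n:ℝ) ((n:ℝ)+(v j:ℝ)) (m j:ℝ) ε hnR (haR j) (hbR j hj) hεpos)
        (hdnn j hj)
    have h1 : ∑ j ∈ Finset.Icc 1 M, d j * q j ε
        ≤ S * (ε*((n:ℝ)+ε)/((n:ℝ)*(n:ℝ))) := by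
      rw [hS, Finset.sum_mul]
      exact Finset.sum_le_sum hub
    have hkey : ε*((n:ℝ)+ε)*S ≤ (n:ℝ)^3/2 := by
      have e1 : ε*((n:ℝ)+ε)*S ≤ ε*((n:ℝ)+1)*S := by
        have h' : (n:ℝ)+ε ≤ (n:ℝ)+1 := by linarith
        nlinarith [mul_nonneg (mul_nonneg hεpos.le hSpos.le) (by linarith : (0:ℝ) ≤ 1 - ε)]
      have e2 : ε*((n:ℝ)+1)*S ≤ ((n:ℝ)^3/(2*S*((n:ℝ)+1)))*((n:ℝ)+1)*S := by
        have hpos : (0:ℝ) < ((n:ℝ)+1)*S := by positivity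
        nlinarith [mul_nonneg (sub_nonneg.2 hε2) hpos.le]
      have e3 : ((n:ℝ)^3/(2*S*((n:ℝ)+1)))*((n:ℝ)+1)*S = (n:ℝ)^3/2 := by
        field_simp
      linarith
    have h2 : S * (ε*((n:ℝ)+ε)/((n:ℝ)*(n:ℝ))) ≤ (n:ℝ)/2 := by
      have e1 : S * (ε*((n:ℝ)+ε)/((n:ℝ)*(n:ℝ))) = (ε*((n:ℝ)+ε)*S)/((n:ℝ)*(n:ℝ)) := by
        ring
      have e2 : (ε*((n:ℝ)+ε)*S)/((n:ℝ)*(n:ℝ)) ≤ ((n:ℝ)^3/2)/((n:ℝ)*(n:ℝ)) :=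
        div_le_div_of_nonneg_right hkey (by positivity) |>.trans_eq rfl
      have e3 : ((n:ℝ)^3/2)/((n:ℝ)*(n:ℝ)) = (n:ℝ)/2 := by
        field_simp
      linarith
    simp only [hg]
    linarith
  -- large point T with g T > 0
  set K : ℝ := ∑ j ∈ Finset.Icc 1 M, d j * (((n:ℝ)+(v j:ℝ)) + (m j:ℝ)) with hK
  have hKnn : 0 ≤ K := by
    apply Finset.sum_nonneg
    intro j hj
    apply mul_nonneg (hdnn j hj)
    have := haR j; have := hbR j hj; linarith
  set T : ℝ := K/(S - (n:ℝ)) + ε + 1 with hT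
  have hTε : ε < T := by
    have h' : 0 ≤ K/(S-(n:ℝ)) := div_nonneg hKnn (by linarith)
    rw [hT]; linarith
  have hTpos : 0 < T := lt_trans hεpos hTε
  have hgT : 0 < g T := by
    have hlb : ∀ j ∈ Finset.Icc 1 M,
        d j * (1 - (((n:ℝ)+(v j:ℝ)) + (m j:ℝ))/T) ≤ d j * q j T := by
      intro j hj
      apply mul_le_mul_of_nonneg_left _ (hdnn j hj)
      have := haR j; have := hbR j hj
      exact aux_q_lb (n:ℝ) ((n:ℝ)+(v j:ℝ)) (m j:ℝ) T hnR.le (by linarith) (by linarith) hTpos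
    have h1 : ∑ j ∈ Finset.Icc 1 M, d j * (1 - (((n:ℝ)+(v j:ℝ)) + (m j:ℝ))/T)
        ≤ ∑ j ∈ Finset.Icc 1 M, d j * q j T := Finset.sum_le_sum hlb
    have h2 : ∑ j ∈ Finset.Icc 1 M, d j * (1 - (((n:ℝ)+(v j:ℝ)) + (m j:ℝ))/T)
        = S - K/T := by
      rw [hS, hK, Finset.sum_div, ← Finset.sum_sub_distrib]
      apply Finset.sum_congr rfl
      intro j _
      ring
    have h3 : K/T < S - (n:ℝ) := by
      rw [div_lt_iff₀ hTpos]
      have e : (S - (n:ℝ)) * T = K + (S - (n:ℝ))*(ε+1) := by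
        have hS0 : S - (n:ℝ) ≠ 0 := ne_of_gt (by linarith)
        rw [hT]
        field_simp
        ring
      have : 0 < (S - (n:ℝ))*(ε+1) := by
        apply mul_pos (by linarith) (by linarith)
      linarith
    linarith [show g T = -(n:ℝ) + ∑ j ∈ Finset.Icc 1 M, d j * q j T from rfl]
  -- continuity
  have hcont : ContinuousOn g (Set.Icc ε T) := by
    apply ContinuousOn.add continuousOn_const
    apply continuousOn_finset_sum
    intro j hj
    apply ContinuousOn.mul continuousOn_const
    apply ContinuousOn.div (by fun_prop) (by fun_prop)
    intro z hz
    have hzε : ε ≤ z := hz.1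
    have hzpos : 0 < z := lt_of_lt_of_le hεpos hzε
    have haz : 0 < ((n:ℝ)+(v j:ℝ)) + z := by have := haR j; linarith
    have hbz : 0 < (m j:ℝ) + z := by have := hbR j hj; linarith
    positivity
  -- IVT
  have h0mem : (0:ℝ) ∈ Set.Icc (g ε) (g T) := ⟨hgε.le, hgT.le⟩
  obtain ⟨z0, hz0mem, hgz0⟩ := intermediate_value_Icc hTε.le hcont h0mem
  have hz0pos : 0 < z0 := lt_of_lt_of_le hεpos hz0mem.1
  -- f z0 = 0
  have hcz0 : 0 < z0*((n:ℝ)+z0) := by positivity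
  have hfz0 : ∑ j ∈ Finset.range (M+1),
      (1/((n:ℝ)+(v j:ℝ)+z0) - 1/((m j:ℝ)+z0)) = 0 := by
    have h := hgf z0 hz0pos
    rw [hgz0] at h
    rcases mul_eq_zero.mp h.symm with h' | h'
    · exact absurd h' (ne_of_gt hcz0)
    · exact h'
  -- sign statements
  have hneg : ∀ z : ℝ, 0 < z → z < z0 →
      ∑ j ∈ Finset.range (M+1), (1/((n:ℝ)+(v j:ℝ)+z) - 1/((m j:ℝ)+z)) < 0 := by
    intro z hz hzz0
    have hgz : g z < 0 := by have := hgmono z z0 hz hzz0; rw [hgz0] at this; exact this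
    have h := hgf z hz
    by_contra hcon
    push_neg at hcon
    have : 0 ≤ z*((n:ℝ)+z) * ∑ j ∈ Finset.range (M+1),
        (1/((n:ℝ)+(v j:ℝ)+z) - 1/((m j:ℝ)+z)) :=
      mul_nonneg (by positivity) hcon
    rw [← h] at this
    linarith
  have hpos : ∀ z : ℝ, z0 < z →
      0 < ∑ j ∈ Finset.range (M+1), (1/((n:ℝ)+(v j:ℝ)+z) - 1/((m j:ℝ)+z)) := by
    intro z hzz0
    have hz : 0 < z := lt_trans hz0pos hzz0
    have hgz : 0 < g z := by have := hgmono z0 z hz0pos hzz0; rw [hgz0] at this; exact this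
    have h := hgf z hz
    by_contra hcon
    push_neg at hcon
    have : z*((n:ℝ)+z) * ∑ j ∈ Finset.range (M+1),
        (1/((n:ℝ)+(v j:ℝ)+z) - 1/((m j:ℝ)+z)) ≤ 0 :=
      mul_nonpos_of_nonneg_of_nonpos (by positivity) hcon
    rw [← h] at this
    linarith
  -- uniqueness
  have huniq : ∀ z : ℝ, 0 < z →
      (∑ j ∈ Finset.range (M+1), (1/((n:ℝ)+(v j:ℝ)+z) - 1/((m j:ℝ)+z)) = 0) → z = z0 := by
    intro z hz hfz
    rcases lt_trichotomy z z0 with h | h | h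
    · exact absurd hfz (ne_of_lt (hneg z hz h))
    · exact h
    · exact absurd hfz (ne_of_gt (hpos z h))
  -- second derivative inequality
  have hderiv : 0 < ∑ j ∈ Finset.range (M+1),
      (1/((m j:ℝ)+z0)^2 - 1/((n:ℝ)+(v j:ℝ)+z0)^2) := by
    set c : ℝ := 2/((n:ℝ)+z0) with hc
    -- split the zero-sum
    have hfz0' : (1/((n:ℝ)+z0) - 1/z0) +
        ∑ j ∈ Finset.Icc 1 M, (1/((n:ℝ)+(v j:ℝ)+z0) - 1/((m j:ℝ)+z0)) = 0 := by
      have h := hfz0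
      rw [hset, Finset.sum_insert h0, hv0, hm0] at h
      push_cast at h
      rw [add_zero, zero_add] at h
      exact h
    have htail : ∀ j ∈ Finset.Icc 1 M,
        c * (1/((m j:ℝ)+z0) - 1/((n:ℝ)+(v j:ℝ)+z0))
          ≤ 1/((m j:ℝ)+z0)^2 - 1/((n:ℝ)+(v j:ℝ)+z0)^2 := by
      intro j hj
      have := aux_tail (n:ℝ) ((n:ℝ)+(v j:ℝ)) (m j:ℝ) z0 hnR (haR j) (hmR j hj) hz0pos
      simpa [hc] using this
    have hsumtail : ∑ j ∈ Finset.Icc 1 M,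
        c * (1/((m j:ℝ)+z0) - 1/((n:ℝ)+(v j:ℝ)+z0))
        ≤ ∑ j ∈ Finset.Icc 1 M, (1/((m j:ℝ)+z0)^2 - 1/((n:ℝ)+(v j:ℝ)+z0)^2) :=
      Finset.sum_le_sum htail
    have hsum2 : ∑ j ∈ Finset.Icc 1 M, (1/((m j:ℝ)+z0) - 1/((n:ℝ)+(v j:ℝ)+z0))
        = 1/((n:ℝ)+z0) - 1/z0 := by
      have e : ∑ j ∈ Finset.Icc 1 M, (1/((m j:ℝ)+z0) - 1/((n:ℝ)+(v j:ℝ)+z0))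
          = -∑ j ∈ Finset.Icc 1 M, (1/((n:ℝ)+(v j:ℝ)+z0) - 1/((m j:ℝ)+z0)) := by
        rw [← Finset.sum_neg_distrib]
        apply Finset.sum_congr rfl
        intro j _
        ring
      rw [e]
      linarith
    have hmulsum : ∑ j ∈ Finset.Icc 1 M,
        c * (1/((m j:ℝ)+z0) - 1/((n:ℝ)+(v j:ℝ)+z0))
        = c * (1/((n:ℝ)+z0) - 1/z0) := by
      rw [← Finset.mul_sum, hsum2]
    have hhead := aux_head (n:ℝ) z0 hnR hz0pos
    rw [hset, Finset.sum_insert h0, hv0, hm0]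
    push_cast
    rw [add_zero, zero_add]
    have e0 : c * (1/z0 - 1/((n:ℝ)+z0)) + c * (1/((n:ℝ)+z0) - 1/z0) = 0 := by ring
    have hheadc : c * (1/z0 - 1/((n:ℝ)+z0)) < 1/z0^2 - 1/((n:ℝ)+z0)^2 := by
      simpa [hc] using hhead
    linarith
  exact ⟨z0, hz0pos, hfz0, huniq, hneg, hpos, hderiv⟩
end
end

section
/- Let (n, M, (v_j), (m_j)) be truncated-product data, z_0 the unique positive solution of Σ_{j=0}^M ( 1/(n+v_j+z) − 1/(m_j+z) ) = 0 (with m_0 = 0), ρ = ( (1/2) Σ_{j=0}^M ( 1/(m_j+z_0)² − 1/(n+v_j+z_0)² ) )^{−1/3} > 0, q_0 = z_0/ρ^{3/2}, λ_M = ∏_{j=0}^M (n+v_j+z_0)/(m_j+z_0), v_{M,n} = Σ_{j=0}^M log(n+v_j) − Σ_{j=1}^M log m_j − (3/2) log ρ − log λ_M, and f_{M,n}(s) = Σ_{j=0}^M ρ^{−3/2}(n+v_j)(1 + ρ^{3/2}s/(n+v_j)) log(1 + ρ^{3/2}s/(n+v_j)) − Σ_{j=1}^M ρ^{−3/2} m_j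 (1 + ρ^{3/2}s/m_j) log(1 + ρ^{3/2}s/m_j) − s log s + s·v_{M,n} for s > 0. Then q_0 is a critical point of f_{M,n} of exact order three: f_{M,n}'(q_0) = 0, f_{M,n}''(q_0) = 0, and f_{M,n}'''(q_0) = 2. -/
open Finset

noncomputable section

/-- The (real-variable) phase function `f_{M,n}(s)`, `s > 0`. -/
def fMnReal (M n : ℕ) (v m : ℕ → ℕ) (z0 : ℝ) (s : ℝ) : ℝ :=
  ∑ j ∈ Finset.range (M + 1),
      rhoAiry M n v m z0 ^ (-(3:ℝ)/2) * ((n : ℝ) + (v j : ℝ)) *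
        (1 + rhoAiry M n v m z0 ^ ((3:ℝ)/2) * s / ((n : ℝ) + (v j : ℝ))) *
        Real.log (1 + rhoAiry M n v m z0 ^ ((3:ℝ)/2) * s / ((n : ℝ) + (v j : ℝ))) -
    ∑ j ∈ Finset.Icc 1 M,
      rhoAiry M n v m z0 ^ (-(3:ℝ)/2) * (m j : ℝ) *
        (1 + rhoAiry M n v m z0 ^ ((3:ℝ)/2) * s / (m j : ℝ)) *
        Real.log (1 + rhoAiry M n v m z0 ^ ((3:ℝ)/2) * s / (m j : ℝ)) -
    s * Real.log s + s * vMn M n v m z0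

/-! ### Auxiliary lemmas -/

lemma hd0' (a r : ℝ) (x : ℝ) : HasDerivAt (fun t => 1 + r * t / a) (r / a) x := by
  have h := (((hasDerivAt_id x).const_mul r).div_const a).const_add 1
  simpa using h

lemma hdA' (c a r x : ℝ) (ha : a ≠ 0) (hr : r ≠ 0) (hc : c = r⁻¹) (hx : 0 < 1 + r * x / a) :
    HasDerivAt (fun t => c * a * (1 + r * t / a) * Real.log (1 + r * t / a))
      (Real.log (1 + r * x / a) + 1) x := by
  have h1 := hd0' a r x
  have h2 : HasDerivAt (fun t => Real.log (1 + r * t / a)) (r / a / (1 + r * x / a)) x :=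
    h1.log hx.ne'
  have h3 := (h1.const_mul (c * a)).mul h2
  have hne : a + r * x ≠ 0 := by
    have h : (1:ℝ) + r * x / a = (a + r * x) / a := by field_simp
    intro h0
    rw [h, h0, zero_div] at hx
    exact lt_irrefl _ hx
  have hval : c * a * (r / a) * Real.log (1 + r * x / a) +
      c * a * (1 + r * x / a) * (r / a / (1 + r * x / a)) = Real.log (1 + r * x / a) + 1 := by
    subst hc
    field_simp [hne]
  rw [← hval]; exact h3

lemma hdB' (a r x : ℝ) (hx : 0 < 1 + r * x / a) :
    HasDerivAt (fun t => Real.log (1 + r * t / a) + 1) (r / a / (1 + r * x / a)) x :=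
  ((hd0' a r x).log hx.ne').add_const 1

lemma hdC' (a r x : ℝ) (hx : 0 < 1 + r * x / a) :
    HasDerivAt (fun t => r / a / (1 + r * t / a)) (-(r / a * (r / a) / (1 + r * x / a) ^ 2)) x := by
  have h := (hasDerivAt_const x (r / a)).div (hd0' a r x) hx.ne'
  have hval : (0 * (1 + r * x / a) - r / a * (r / a)) / (1 + r * x / a) ^ 2 =
      -(r / a * (r / a) / (1 + r * x / a) ^ 2) := by ring
  rw [← hval]; exact h

lemma term2' (r a z : ℝ) (ha : 0 < a) (haz : 0 < a + z) :
    r / a / (1 + z / a) = r * (1 / (a + z)) := by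
  field_simp

lemma term3' (r a z : ℝ) (ha : 0 < a) (haz : 0 < a + z) :
    -(r / a * (r / a) / (1 + z / a) ^ 2) = r * r * -(1 / (a + z) ^ 2) := by
  rw [show (1:ℝ) + z / a = (a + z) / a from by field_simp, div_pow]
  field_simp

lemma term4' (q r z : ℝ) (hq : q = z / r) : q⁻¹ = r * (1 / z) := by
  rw [hq, inv_div, div_eq_mul_one_div]

lemma term5' (q r z : ℝ) (hq : q = z / r) : (q ^ 2)⁻¹ = r * r * (1 / z ^ 2) := by
  rw [hq, div_pow, inv_div]
  ring

/-- First derivative of `fMnReal`. -/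
def gOne (M n : ℕ) (v m : ℕ → ℕ) (r V : ℝ) (s : ℝ) : ℝ :=
  (∑ j ∈ Finset.range (M + 1), (Real.log (1 + r * s / ((n : ℝ) + (v j : ℝ))) + 1)) -
    (∑ j ∈ Finset.Icc 1 M, (Real.log (1 + r * s / (m j : ℝ)) + 1)) -
    (Real.log s + 1) + 1 * V

/-- Second derivative of `fMnReal`. -/
def gTwo (M n : ℕ) (v m : ℕ → ℕ) (r : ℝ) (s : ℝ) : ℝ :=
  (∑ j ∈ Finset.range (M + 1), r / ((n : ℝ) + (v j : ℝ)) / (1 + r * s / ((n : ℝ) + (v j : ℝ)))) -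
    (∑ j ∈ Finset.Icc 1 M, r / (m j : ℝ) / (1 + r * s / (m j : ℝ))) - s⁻¹

/-- Third derivative of `fMnReal`. -/
def gThree (M n : ℕ) (v m : ℕ → ℕ) (r : ℝ) (s : ℝ) : ℝ :=
  (∑ j ∈ Finset.range (M + 1),
      -(r / ((n : ℝ) + (v j : ℝ)) * (r / ((n : ℝ) + (v j : ℝ))) /
        (1 + r * s / ((n : ℝ) + (v j : ℝ))) ^ 2)) -
    (∑ j ∈ Finset.Icc 1 M,
      -(r / (m j : ℝ) * (r / (m j : ℝ)) / (1 + r * s / (m j : ℝ)) ^ 2)) - -(s ^ 2)⁻¹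

lemma hadOne (M n : ℕ) (v m : ℕ → ℕ) (z0 s : ℝ)
    (hρ : 0 < rhoAiry M n v m z0)
    (hA : ∀ j : ℕ, 0 < (n : ℝ) + (v j : ℝ))
    (hB : ∀ j ∈ Finset.Icc 1 M, 0 < (m j : ℝ))
    (hs : 0 < s) :
    HasDerivAt (fMnReal M n v m z0)
      (gOne M n v m (rhoAiry M n v m z0 ^ ((3:ℝ)/2)) (vMn M n v m z0) s) s := by
  have hr : 0 < rhoAiry M n v m z0 ^ ((3:ℝ)/2) := Real.rpow_pos_of_pos hρ _
  have hc : rhoAiry M n v m z0 ^ (-(3:ℝ)/2) = (rhoAiry M n v m z0 ^ ((3:ℝ)/2))⁻¹ := by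
    rw [neg_div, Real.rpow_neg hρ.le]
  have hpos : ∀ a : ℝ, 0 < a → 0 < 1 + rhoAiry M n v m z0 ^ ((3:ℝ)/2) * s / a := by
    intro a ha
    have := div_pos (mul_pos hr hs) ha
    linarith
  have h1 : HasDerivAt (fun t => ∑ j ∈ Finset.range (M + 1),
        rhoAiry M n v m z0 ^ (-(3:ℝ)/2) * ((n : ℝ) + (v j : ℝ)) *
          (1 + rhoAiry M n v m z0 ^ ((3:ℝ)/2) * t / ((n : ℝ) + (v j : ℝ))) *
          Real.log (1 + rhoAiry M n v m z0 ^ ((3:ℝ)/2) * t / ((n : ℝ) + (v j : ℝ))))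
      (∑ j ∈ Finset.range (M + 1),
        (Real.log (1 + rhoAiry M n v m z0 ^ ((3:ℝ)/2) * s / ((n : ℝ) + (v j : ℝ))) + 1)) s :=
    HasDerivAt.fun_sum fun j _ => hdA' _ _ _ _ (hA j).ne' hr.ne' hc (hpos _ (hA j))
  have h2 : HasDerivAt (fun t => ∑ j ∈ Finset.Icc 1 M,
        rhoAiry M n v m z0 ^ (-(3:ℝ)/2) * (m j : ℝ) *
          (1 + rhoAiry M n v m z0 ^ ((3:ℝ)/2) * t / (m j : ℝ)) *
          Real.log (1 + rhoAiry M n v m z0 ^ ((3:ℝ)/2) * t / (m j : ℝ)))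
      (∑ j ∈ Finset.Icc 1 M,
        (Real.log (1 + rhoAiry M n v m z0 ^ ((3:ℝ)/2) * s / (m j : ℝ)) + 1)) s :=
    HasDerivAt.fun_sum fun j hj => hdA' _ _ _ _ (hB j hj).ne' hr.ne' hc (hpos _ (hB j hj))
  have h3 := Real.hasDerivAt_mul_log hs.ne'
  have h4 : HasDerivAt (fun t : ℝ => t * vMn M n v m z0) (1 * vMn M n v m z0) s :=
    (hasDerivAt_id s).mul_const _
  exact ((h1.sub h2).sub h3).add h4

lemma hadTwo (M n : ℕ) (v m : ℕ → ℕ) (r V s : ℝ)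
    (hr : 0 < r)
    (hA : ∀ j : ℕ, 0 < (n : ℝ) + (v j : ℝ))
    (hB : ∀ j ∈ Finset.Icc 1 M, 0 < (m j : ℝ))
    (hs : 0 < s) :
    HasDerivAt (gOne M n v m r V) (gTwo M n v m r s) s := by
  have hpos : ∀ a : ℝ, 0 < a → 0 < 1 + r * s / a := by
    intro a ha
    have := div_pos (mul_pos hr hs) ha
    linarith
  have h1 : HasDerivAt (fun t => ∑ j ∈ Finset.range (M + 1),
        (Real.log (1 + r * t / ((n : ℝ) + (v j : ℝ))) + 1))
      (∑ j ∈ Finset.range (M + 1),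
        r / ((n : ℝ) + (v j : ℝ)) / (1 + r * s / ((n : ℝ) + (v j : ℝ)))) s :=
    HasDerivAt.fun_sum fun j _ => hdB' _ _ _ (hpos _ (hA j))
  have h2 : HasDerivAt (fun t => ∑ j ∈ Finset.Icc 1 M,
        (Real.log (1 + r * t / (m j : ℝ)) + 1))
      (∑ j ∈ Finset.Icc 1 M, r / (m j : ℝ) / (1 + r * s / (m j : ℝ))) s :=
    HasDerivAt.fun_sum fun j hj => hdB' _ _ _ (hpos _ (hB j hj))
  have h3 : HasDerivAt (fun x : ℝ => Real.log x + 1) s⁻¹ s :=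
    (Real.hasDerivAt_log hs.ne').add_const 1
  exact ((h1.sub h2).sub h3).add_const (1 * V)

lemma hadThree (M n : ℕ) (v m : ℕ → ℕ) (r s : ℝ)
    (hr : 0 < r)
    (hA : ∀ j : ℕ, 0 < (n : ℝ) + (v j : ℝ))
    (hB : ∀ j ∈ Finset.Icc 1 M, 0 < (m j : ℝ))
    (hs : 0 < s) :
    HasDerivAt (gTwo M n v m r) (gThree M n v m r s) s := by
  have hpos : ∀ a : ℝ, 0 < a → 0 < 1 + r * s / a := by
    intro a ha
    have := div_pos (mul_pos hr hs) ha
    linarith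
  have h1 : HasDerivAt (fun t => ∑ j ∈ Finset.range (M + 1),
        r / ((n : ℝ) + (v j : ℝ)) / (1 + r * t / ((n : ℝ) + (v j : ℝ))))
      (∑ j ∈ Finset.range (M + 1),
        -(r / ((n : ℝ) + (v j : ℝ)) * (r / ((n : ℝ) + (v j : ℝ))) /
          (1 + r * s / ((n : ℝ) + (v j : ℝ))) ^ 2)) s :=
    HasDerivAt.fun_sum fun j _ => hdC' _ _ _ (hpos _ (hA j))
  have h2 : HasDerivAt (fun t => ∑ j ∈ Finset.Icc 1 M,
        r / (m j : ℝ) / (1 + r * t / (m j : ℝ)))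
      (∑ j ∈ Finset.Icc 1 M,
        -(r / (m j : ℝ) * (r / (m j : ℝ)) / (1 + r * s / (m j : ℝ)) ^ 2)) s :=
    HasDerivAt.fun_sum fun j hj => hdC' _ _ _ (hpos _ (hB j hj))
  have h3 : HasDerivAt (fun x : ℝ => x⁻¹) (-(s ^ 2)⁻¹) s := hasDerivAt_inv hs.ne'
  exact (h1.sub h2).sub h3

/-- **`q₀` is a critical point of `f_{M,n}` of exact order three.** -/
theorem fMn_critical_point_order_three
    (M n : ℕ) (v m : ℕ → ℕ)
    (hdata : TruncatedData M n v m)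
    (z0 : ℝ) (hz0pos : 0 < z0)
    (hz0 : ∑ j ∈ Finset.range (M + 1),
        (1 / ((n : ℝ) + (v j : ℝ) + z0) - 1 / ((m j : ℝ) + z0)) = 0) :
    deriv (fMnReal M n v m z0) (q0Airy M n v m z0) = 0 ∧
    deriv (deriv (fMnReal M n v m z0)) (q0Airy M n v m z0) = 0 ∧
    deriv (deriv (deriv (fMnReal M n v m z0))) (q0Airy M n v m z0) = 2 := by
  obtain ⟨hM, hn, hv0, hm0, hnm, hsum⟩ := hdata
  have hins : Finset.range (M + 1) = insert 0 (Finset.Icc 1 M) := by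
    ext x; simp; omega
  have hnotin : (0 : ℕ) ∉ Finset.Icc 1 M := by simp
  have hn1 : (1 : ℝ) ≤ (n : ℝ) := by exact_mod_cast hn
  have hA : ∀ j : ℕ, 0 < (n : ℝ) + (v j : ℝ) := by
    intro j
    have := Nat.cast_nonneg (α := ℝ) (v j)
    linarith
  have hAz : ∀ j : ℕ, 0 < (n : ℝ) + (v j : ℝ) + z0 := by
    intro j; linarith [hA j]
  have hABle : ∀ j ∈ Finset.Icc 1 M, (n : ℝ) + (v j : ℝ) ≤ (m j : ℝ) := by
    intro j hj
    exact_mod_cast hnm j hj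
  have hB : ∀ j ∈ Finset.Icc 1 M, 0 < (m j : ℝ) := by
    intro j hj
    linarith [hA j, hABle j hj]
  have hBz : ∀ j : ℕ, 0 < (m j : ℝ) + z0 := by
    intro j
    have := Nat.cast_nonneg (α := ℝ) (m j)
    linarith
  -- the saddle point equation, split at `j = 0`
  have hxsum : ∑ j ∈ Finset.Icc 1 M,
      (1 / ((n : ℝ) + (v j : ℝ) + z0) - 1 / ((m j : ℝ) + z0)) =
      1 / z0 - 1 / ((n : ℝ) + z0) := by
    have h := hz0
    rw [hins, Finset.sum_insert hnotin, hv0, hm0] at h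
    push_cast at h
    simp only [add_zero, zero_add] at h
    linarith [h]
  have hzsplit : ∑ j ∈ Finset.range (M + 1), 1 / ((n : ℝ) + (v j : ℝ) + z0) =
      1 / z0 + ∑ j ∈ Finset.Icc 1 M, 1 / ((m j : ℝ) + z0) := by
    have h := hz0
    rw [Finset.sum_sub_distrib] at h
    have h2 : ∑ j ∈ Finset.range (M + 1), 1 / ((m j : ℝ) + z0) =
        1 / z0 + ∑ j ∈ Finset.Icc 1 M, 1 / ((m j : ℝ) + z0) := by
      rw [hins, Finset.sum_insert hnotin, hm0]
      push_cast
      simp only [zero_add]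
    linarith [h, h2]
  -- positivity of the curvature sum
  have hxnonneg : ∀ j ∈ Finset.Icc 1 M,
      0 ≤ 1 / ((n : ℝ) + (v j : ℝ) + z0) - 1 / ((m j : ℝ) + z0) := by
    intro j hj
    have h1 := one_div_le_one_div_of_le (hAz j) (by linarith [hABle j hj] :
      (n : ℝ) + (v j : ℝ) + z0 ≤ (m j : ℝ) + z0)
    linarith
  have hw : ∀ j ∈ Finset.Icc 1 M,
      0 < (1 / z0 + 1 / ((n : ℝ) + z0)) -
        (1 / ((n : ℝ) + (v j : ℝ) + z0) + 1 / ((m j : ℝ) + z0)) := by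
    intro j hj
    have h1 := one_div_lt_one_div_of_lt hz0pos
      (by linarith [hA j] : z0 < (n : ℝ) + (v j : ℝ) + z0)
    have h2 := one_div_le_one_div_of_le (by linarith : (0:ℝ) < (n : ℝ) + z0)
      (by linarith [hABle j hj, Nat.cast_nonneg (α := ℝ) (v j)] :
        (n : ℝ) + z0 ≤ (m j : ℝ) + z0)
    linarith
  have hSsum : 0 < ∑ j ∈ Finset.range (M + 1),
      (1 / ((m j : ℝ) + z0) ^ 2 - 1 / ((n : ℝ) + (v j : ℝ) + z0) ^ 2) := by
    have hkey : (1 / z0 ^ 2 - 1 / ((n : ℝ) + z0) ^ 2) +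
        ∑ j ∈ Finset.Icc 1 M, (1 / ((m j : ℝ) + z0) ^ 2 - 1 / ((n : ℝ) + (v j : ℝ) + z0) ^ 2) =
        ∑ j ∈ Finset.Icc 1 M,
          (1 / ((n : ℝ) + (v j : ℝ) + z0) - 1 / ((m j : ℝ) + z0)) *
            ((1 / z0 + 1 / ((n : ℝ) + z0)) -
              (1 / ((n : ℝ) + (v j : ℝ) + z0) + 1 / ((m j : ℝ) + z0))) := by
      calc (1 / z0 ^ 2 - 1 / ((n : ℝ) + z0) ^ 2) +
          ∑ j ∈ Finset.Icc 1 M, (1 / ((m j : ℝ) + z0) ^ 2 - 1 / ((n : ℝ) + (v j : ℝ) + z0) ^ 2)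
          = (1 / z0 - 1 / ((n : ℝ) + z0)) * (1 / z0 + 1 / ((n : ℝ) + z0)) +
            ∑ j ∈ Finset.Icc 1 M,
              (1 / ((m j : ℝ) + z0) ^ 2 - 1 / ((n : ℝ) + (v j : ℝ) + z0) ^ 2) := by
            simp only [← one_div_pow]
            ring
        _ = (∑ j ∈ Finset.Icc 1 M, (1 / ((n : ℝ) + (v j : ℝ) + z0) - 1 / ((m j : ℝ) + z0))) *
              (1 / z0 + 1 / ((n : ℝ) + z0)) +
            ∑ j ∈ Finset.Icc 1 M,
              (1 / ((m j : ℝ) + z0) ^ 2 - 1 / ((n : ℝ) + (v j : ℝ) + z0) ^ 2) := by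
            rw [hxsum]
        _ = ∑ j ∈ Finset.Icc 1 M,
              ((1 / ((n : ℝ) + (v j : ℝ) + z0) - 1 / ((m j : ℝ) + z0)) *
                (1 / z0 + 1 / ((n : ℝ) + z0)) +
               (1 / ((m j : ℝ) + z0) ^ 2 - 1 / ((n : ℝ) + (v j : ℝ) + z0) ^ 2)) := by
            rw [Finset.sum_mul, ← Finset.sum_add_distrib]
        _ = _ := Finset.sum_congr rfl fun j _ => by
            simp only [← one_div_pow]
            ring
    have hpos : 0 < ∑ j ∈ Finset.Icc 1 M,
        (1 / ((n : ℝ) + (v j : ℝ) + z0) - 1 / ((m j : ℝ) + z0)) *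
          ((1 / z0 + 1 / ((n : ℝ) + z0)) -
            (1 / ((n : ℝ) + (v j : ℝ) + z0) + 1 / ((m j : ℝ) + z0))) := by
      apply Finset.sum_pos' (fun j hj => mul_nonneg (hxnonneg j hj) (hw j hj).le)
      have hex : ∃ j ∈ Finset.Icc 1 M,
          0 < 1 / ((n : ℝ) + (v j : ℝ) + z0) - 1 / ((m j : ℝ) + z0) := by
        by_contra hcon
        push_neg at hcon
        have h1 : ∑ j ∈ Finset.Icc 1 M,
            (1 / ((n : ℝ) + (v j : ℝ) + z0) - 1 / ((m j : ℝ) + z0)) ≤ 0 :=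
          Finset.sum_nonpos hcon
        have h2 : 1 / ((n : ℝ) + z0) < 1 / z0 :=
          one_div_lt_one_div_of_lt hz0pos (by linarith : z0 < (n : ℝ) + z0)
        rw [hxsum] at h1
        linarith
      obtain ⟨j, hj, hx⟩ := hex
      exact ⟨j, hj, mul_pos hx (hw j hj)⟩
    have hsplit : ∑ j ∈ Finset.range (M + 1),
        (1 / ((m j : ℝ) + z0) ^ 2 - 1 / ((n : ℝ) + (v j : ℝ) + z0) ^ 2) =
        (1 / z0 ^ 2 - 1 / ((n : ℝ) + z0) ^ 2) +
        ∑ j ∈ Finset.Icc 1 M,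
          (1 / ((m j : ℝ) + z0) ^ 2 - 1 / ((n : ℝ) + (v j : ℝ) + z0) ^ 2) := by
      rw [hins, Finset.sum_insert hnotin, hv0, hm0]
      push_cast
      simp only [add_zero, zero_add]
    rw [hsplit, hkey]
    exact hpos
  -- positivity of `ρ`, `r`, `q₀`
  have hρ : 0 < rhoAiry M n v m z0 := by
    rw [rhoAiry]
    exact Real.rpow_pos_of_pos (mul_pos (by norm_num) hSsum) _
  have hr : 0 < rhoAiry M n v m z0 ^ ((3:ℝ)/2) := Real.rpow_pos_of_pos hρ _
  have hq0def : q0Airy M n v m z0 = z0 / rhoAiry M n v m z0 ^ ((3:ℝ)/2) := by rw [q0Airy]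
  have hq0 : 0 < q0Airy M n v m z0 := by
    rw [hq0def]; exact div_pos hz0pos hr
  have hrq : rhoAiry M n v m z0 ^ ((3:ℝ)/2) * q0Airy M n v m z0 = z0 := by
    rw [hq0def]; field_simp
  -- derivative identities on `Ioi 0`
  have hD1 : ∀ s ∈ Set.Ioi (0:ℝ), deriv (fMnReal M n v m z0) s =
      gOne M n v m (rhoAiry M n v m z0 ^ ((3:ℝ)/2)) (vMn M n v m z0) s :=
    fun s hs => (hadOne M n v m z0 s hρ hA hB hs).deriv
  have hD2 : ∀ s ∈ Set.Ioi (0:ℝ),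
      deriv (gOne M n v m (rhoAiry M n v m z0 ^ ((3:ℝ)/2)) (vMn M n v m z0)) s =
      gTwo M n v m (rhoAiry M n v m z0 ^ ((3:ℝ)/2)) s :=
    fun s hs => (hadTwo M n v m _ _ s hr hA hB hs).deriv
  have hD3 : ∀ s ∈ Set.Ioi (0:ℝ),
      deriv (gTwo M n v m (rhoAiry M n v m z0 ^ ((3:ℝ)/2))) s =
      gThree M n v m (rhoAiry M n v m z0 ^ ((3:ℝ)/2)) s :=
    fun s hs => (hadThree M n v m _ s hr hA hB hs).deriv
  have hE1 : deriv (fMnReal M n v m z0) =ᶠ[nhds (q0Airy M n v m z0)]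
      gOne M n v m (rhoAiry M n v m z0 ^ ((3:ℝ)/2)) (vMn M n v m z0) :=
    Filter.eventuallyEq_of_mem (Ioi_mem_nhds hq0) hD1
  have hDD : ∀ s ∈ Set.Ioi (0:ℝ), deriv (deriv (fMnReal M n v m z0)) s =
      gTwo M n v m (rhoAiry M n v m z0 ^ ((3:ℝ)/2)) s := by
    intro s hs
    have hE : deriv (fMnReal M n v m z0) =ᶠ[nhds s]
        gOne M n v m (rhoAiry M n v m z0 ^ ((3:ℝ)/2)) (vMn M n v m z0) :=
      Filter.eventuallyEq_of_mem (Ioi_mem_nhds hs) hD1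
    exact hE.deriv_eq.trans (hD2 s hs)
  have hE2 : deriv (deriv (fMnReal M n v m z0)) =ᶠ[nhds (q0Airy M n v m z0)]
      gTwo M n v m (rhoAiry M n v m z0 ^ ((3:ℝ)/2)) :=
    Filter.eventuallyEq_of_mem (Ioi_mem_nhds hq0) hDD
  -- log splitting facts
  have hmsplit : ∑ j ∈ Finset.range (M + 1), Real.log ((m j : ℝ) + z0) =
      Real.log z0 + ∑ j ∈ Finset.Icc 1 M, Real.log ((m j : ℝ) + z0) := by
    rw [hins, Finset.sum_insert hnotin, hm0]
    simp only [Nat.cast_zero, zero_add]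
  have hlam : Real.log (lamAiry M n v m z0) =
      (∑ j ∈ Finset.range (M + 1), Real.log ((n : ℝ) + (v j : ℝ) + z0)) -
        (Real.log z0 + ∑ j ∈ Finset.Icc 1 M, Real.log ((m j : ℝ) + z0)) := by
    rw [lamAiry, Real.log_prod (fun j _ => div_ne_zero (hAz j).ne' (hBz j).ne')]
    rw [Finset.sum_congr rfl fun j _ => Real.log_div (hAz j).ne' (hBz j).ne',
      Finset.sum_sub_distrib, hmsplit]
  -- evaluations
  have e3 : Real.log (q0Airy M n v m z0) =
      Real.log z0 - 3 / 2 * Real.log (rhoAiry M n v m z0) := by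
    rw [hq0def, Real.log_div hz0pos.ne' hr.ne', Real.log_rpow hρ]
  have e1 : ∑ j ∈ Finset.range (M + 1), (Real.log (1 + z0 / ((n : ℝ) + (v j : ℝ))) + 1) =
      (∑ j ∈ Finset.range (M + 1), Real.log ((n : ℝ) + (v j : ℝ) + z0)) -
        (∑ j ∈ Finset.range (M + 1), Real.log ((n : ℝ) + (v j : ℝ))) + ((M : ℝ) + 1) := by
    rw [Finset.sum_congr rfl fun j _ => show
        Real.log (1 + z0 / ((n : ℝ) + (v j : ℝ))) + 1 =
        (Real.log ((n : ℝ) + (v j : ℝ) + z0) - Real.log ((n : ℝ) + (v j : ℝ))) + 1 from by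
      rw [show (1:ℝ) + z0 / ((n : ℝ) + (v j : ℝ)) =
          ((n : ℝ) + (v j : ℝ) + z0) / ((n : ℝ) + (v j : ℝ)) from by
        field_simp [(hA j).ne'],
        Real.log_div (hAz j).ne' (hA j).ne']]
    rw [Finset.sum_add_distrib, Finset.sum_sub_distrib, Finset.sum_const, Finset.card_range]
    push_cast
    ring
  have e2 : ∑ j ∈ Finset.Icc 1 M, (Real.log (1 + z0 / (m j : ℝ)) + 1) =
      (∑ j ∈ Finset.Icc 1 M, Real.log ((m j : ℝ) + z0)) -
        (∑ j ∈ Finset.Icc 1 M, Real.log (m j : ℝ)) + (M : ℝ) := by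
    rw [Finset.sum_congr rfl fun j hj => show
        Real.log (1 + z0 / (m j : ℝ)) + 1 =
        (Real.log ((m j : ℝ) + z0) - Real.log (m j : ℝ)) + 1 from by
      rw [show (1:ℝ) + z0 / (m j : ℝ) = ((m j : ℝ) + z0) / (m j : ℝ) from by
        field_simp [(hB j hj).ne'],
        Real.log_div (hBz j).ne' (hB j hj).ne']]
    rw [Finset.sum_add_distrib, Finset.sum_sub_distrib, Finset.sum_const, Nat.card_Icc,
      Nat.add_sub_cancel]
    push_cast
    ring
  have heval1 : gOne M n v m (rhoAiry M n v m z0 ^ ((3:ℝ)/2)) (vMn M n v m z0)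
      (q0Airy M n v m z0) = 0 := by
    rw [gOne, hrq, e1, e2, e3, vMn, hlam]
    ring
  have heval2 : gTwo M n v m (rhoAiry M n v m z0 ^ ((3:ℝ)/2)) (q0Airy M n v m z0) = 0 := by
    have t1 : ∑ j ∈ Finset.range (M + 1),
        rhoAiry M n v m z0 ^ ((3:ℝ)/2) / ((n : ℝ) + (v j : ℝ)) /
          (1 + z0 / ((n : ℝ) + (v j : ℝ))) =
        ∑ j ∈ Finset.range (M + 1),
          rhoAiry M n v m z0 ^ ((3:ℝ)/2) * (1 / ((n : ℝ) + (v j : ℝ) + z0)) :=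
      Finset.sum_congr rfl fun j _ => term2' _ _ _ (hA j) (hAz j)
    have t2 : ∑ j ∈ Finset.Icc 1 M,
        rhoAiry M n v m z0 ^ ((3:ℝ)/2) / (m j : ℝ) / (1 + z0 / (m j : ℝ)) =
        ∑ j ∈ Finset.Icc 1 M, rhoAiry M n v m z0 ^ ((3:ℝ)/2) * (1 / ((m j : ℝ) + z0)) :=
      Finset.sum_congr rfl fun j hj => term2' _ _ _ (hB j hj) (hBz j)
    have t4 : (q0Airy M n v m z0)⁻¹ = rhoAiry M n v m z0 ^ ((3:ℝ)/2) * (1 / z0) :=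
      term4' _ _ _ hq0def
    rw [gTwo, hrq, t1, t2, t4, ← Finset.mul_sum, ← Finset.mul_sum]
    linear_combination (rhoAiry M n v m z0 ^ ((3:ℝ)/2)) * hzsplit
  have heval3 : gThree M n v m (rhoAiry M n v m z0 ^ ((3:ℝ)/2)) (q0Airy M n v m z0) = 2 := by
    have t1 : ∑ j ∈ Finset.range (M + 1),
        -(rhoAiry M n v m z0 ^ ((3:ℝ)/2) / ((n : ℝ) + (v j : ℝ)) *
            (rhoAiry M n v m z0 ^ ((3:ℝ)/2) / ((n : ℝ) + (v j : ℝ))) /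
          (1 + z0 / ((n : ℝ) + (v j : ℝ))) ^ 2) =
        ∑ j ∈ Finset.range (M + 1),
          rhoAiry M n v m z0 ^ ((3:ℝ)/2) * rhoAiry M n v m z0 ^ ((3:ℝ)/2) *
            -(1 / ((n : ℝ) + (v j : ℝ) + z0) ^ 2) :=
      Finset.sum_congr rfl fun j _ => term3' _ _ _ (hA j) (hAz j)
    have t2 : ∑ j ∈ Finset.Icc 1 M,
        -(rhoAiry M n v m z0 ^ ((3:ℝ)/2) / (m j : ℝ) *
            (rhoAiry M n v m z0 ^ ((3:ℝ)/2) / (m j : ℝ)) / (1 + z0 / (m j : ℝ)) ^ 2) =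
        ∑ j ∈ Finset.Icc 1 M,
          rhoAiry M n v m z0 ^ ((3:ℝ)/2) * rhoAiry M n v m z0 ^ ((3:ℝ)/2) *
            -(1 / ((m j : ℝ) + z0) ^ 2) :=
      Finset.sum_congr rfl fun j hj => term3' _ _ _ (hB j hj) (hBz j)
    have t5 : ((q0Airy M n v m z0) ^ 2)⁻¹ =
        rhoAiry M n v m z0 ^ ((3:ℝ)/2) * rhoAiry M n v m z0 ^ ((3:ℝ)/2) * (1 / z0 ^ 2) :=
      term5' _ _ _ hq0def
    have hsq : (∑ j ∈ Finset.range (M + 1), -(1 / ((n : ℝ) + (v j : ℝ) + z0) ^ 2)) -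
        (∑ j ∈ Finset.Icc 1 M, -(1 / ((m j : ℝ) + z0) ^ 2)) + 1 / z0 ^ 2 =
        ∑ j ∈ Finset.range (M + 1),
          (1 / ((m j : ℝ) + z0) ^ 2 - 1 / ((n : ℝ) + (v j : ℝ) + z0) ^ 2) := by
      have hbsq : ∑ j ∈ Finset.range (M + 1), 1 / ((m j : ℝ) + z0) ^ 2 =
          1 / z0 ^ 2 + ∑ j ∈ Finset.Icc 1 M, 1 / ((m j : ℝ) + z0) ^ 2 := by
        rw [hins, Finset.sum_insert hnotin, hm0]
        push_cast
        norm_num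
      rw [Finset.sum_sub_distrib, hbsq, Finset.sum_neg_distrib, Finset.sum_neg_distrib]
      ring
    have hW : 0 < (1/2 : ℝ) * ∑ j ∈ Finset.range (M + 1),
        (1 / ((m j : ℝ) + z0) ^ 2 - 1 / ((n : ℝ) + (v j : ℝ) + z0) ^ 2) :=
      mul_pos (by norm_num) hSsum
    have hrr : rhoAiry M n v m z0 ^ ((3:ℝ)/2) * rhoAiry M n v m z0 ^ ((3:ℝ)/2) =
        ((1/2 : ℝ) * ∑ j ∈ Finset.range (M + 1),
          (1 / ((m j : ℝ) + z0) ^ 2 - 1 / ((n : ℝ) + (v j : ℝ) + z0) ^ 2))⁻¹ := by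
      rw [← Real.rpow_add hρ, show (3:ℝ)/2 + (3:ℝ)/2 = (3:ℝ) from by norm_num,
        rhoAiry, ← Real.rpow_mul hW.le,
        show ((-(1/3) : ℝ) * 3) = -1 from by norm_num, Real.rpow_neg_one]
    have hfinal : rhoAiry M n v m z0 ^ ((3:ℝ)/2) * rhoAiry M n v m z0 ^ ((3:ℝ)/2) *
        ∑ j ∈ Finset.range (M + 1),
          (1 / ((m j : ℝ) + z0) ^ 2 - 1 / ((n : ℝ) + (v j : ℝ) + z0) ^ 2) = 2 := by
      rw [hrr, mul_inv, mul_assoc, inv_mul_cancel₀ hSsum.ne']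
      norm_num
    rw [gThree, hrq, t1, t2, t5, ← Finset.mul_sum, ← Finset.mul_sum]
    linear_combination (rhoAiry M n v m z0 ^ ((3:ℝ)/2) * rhoAiry M n v m z0 ^ ((3:ℝ)/2)) * hsq
      + hfinal
  refine ⟨?_, ?_, ?_⟩
  · rw [hD1 _ hq0]
    exact heval1
  · rw [hE1.deriv_eq, hD2 _ hq0]
    exact heval2
  · rw [hE2.deriv_eq, hD3 _ hq0]
    exact heval3
end
end

section
/- Let M be a positive integer, a > 0 a real number, and θ ∈ (0, π/(M+1)). Set x(θ) = a^M sin^{M+1}((M+1)θ) / ( (a+1)^{M+1} sin θ · sin^M(Mθ) ) and V_±(θ) = ( sin((M+1)θ)/sin(Mθ) ) e^{±iθ}. Then both V_+(θ) and V_−(θ) are solutions of the algebraic equation V^{M+1} = (a+1)^{M+1} a^{−M} (V − 1) x(θ). -/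
open Complex

noncomputable section

/-- The parameterization `x(θ)` of the spectral variable. -/
def xParam (M : ℕ) (a θ : ℝ) : ℝ :=
  a ^ M * Real.sin (((M : ℝ) + 1) * θ) ^ (M + 1) /
    ((a + 1) ^ (M + 1) * Real.sin θ * Real.sin ((M : ℝ) * θ) ^ M)

/-- `V_+(θ)`. -/
def Vplus (M : ℕ) (θ : ℝ) : ℂ :=
  ((Real.sin (((M : ℝ) + 1) * θ) / Real.sin ((M : ℝ) * θ) : ℝ) : ℂ) *
    Complex.exp (I * (θ : ℂ))

/-- `V_-(θ)`. -/
def Vminus (M : ℕ) (θ : ℝ) : ℂ :=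
  ((Real.sin (((M : ℝ) + 1) * θ) / Real.sin ((M : ℝ) * θ) : ℝ) : ℂ) *
    Complex.exp (-(I * (θ : ℂ)))

private lemma solve_aux (M : ℕ) (s1 sM sM1 : ℝ) (h1 : s1 ≠ 0) (hsM : sM ≠ 0)
    (e : ℂ) (hkey : (sM1 : ℂ) * e - sM = (s1 : ℂ) * e ^ (M + 1)) :
    (((sM1 / sM : ℝ) : ℂ) * e) ^ (M + 1) =
      ((sM1 : ℂ) ^ (M + 1) / ((s1 : ℂ) * (sM : ℂ) ^ M)) *
        (((sM1 / sM : ℝ) : ℂ) * e - 1) := by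
  have h1' : (s1 : ℂ) ≠ 0 := by exact_mod_cast Complex.ofReal_ne_zero.mpr h1
  have hsM' : (sM : ℂ) ≠ 0 := by exact_mod_cast Complex.ofReal_ne_zero.mpr hsM
  push_cast
  rw [mul_pow, div_pow]
  have h2 : (sM1 : ℂ) / sM * e - 1 = ((sM1 : ℂ) * e - sM) / sM := by
    field_simp
  rw [h2, hkey]
  field_simp
  ring

/-- **`V_±(θ)` solve the algebraic equation** `V^{M+1} = (a+1)^{M+1} a^{-M} (V-1) x(θ)`. -/
theorem Vpm_solve_algebraic_equation
    (M : ℕ) (hM : 0 < M) (a : ℝ) (ha : 0 < a)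
    (θ : ℝ) (hθ : θ ∈ Set.Ioo (0 : ℝ) (Real.pi / ((M : ℝ) + 1))) :
    Vplus M θ ^ (M + 1) =
      (((a + 1 : ℝ) : ℂ)) ^ (M + 1) * (((a : ℝ) : ℂ) ^ M)⁻¹ *
        (Vplus M θ - 1) * ((xParam M a θ : ℝ) : ℂ) ∧
    Vminus M θ ^ (M + 1) =
      (((a + 1 : ℝ) : ℂ)) ^ (M + 1) * (((a : ℝ) : ℂ) ^ M)⁻¹ *
        (Vminus M θ - 1) * ((xParam M a θ : ℝ) : ℂ) := by
  obtain ⟨hθ0, hθ1⟩ := hθ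
  have hM1 : (0 : ℝ) < (M : ℝ) + 1 := by positivity
  have hM0 : (0 : ℝ) ≤ (M : ℝ) := Nat.cast_nonneg M
  have hMpos : (0 : ℝ) < (M : ℝ) := by exact_mod_cast hM
  have hMθπ : ((M : ℝ) + 1) * θ < Real.pi := by
    have := (lt_div_iff₀ hM1).mp hθ1
    linarith [this]
  have hs1 : 0 < Real.sin θ := Real.sin_pos_of_pos_of_lt_pi hθ0 (by nlinarith)
  have hsM : 0 < Real.sin ((M : ℝ) * θ) := by
    apply Real.sin_pos_of_pos_of_lt_pi (by positivity)
    nlinarith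
  have hsM1 : 0 < Real.sin (((M : ℝ) + 1) * θ) :=
    Real.sin_pos_of_pos_of_lt_pi (by positivity) hMθπ
  have hA : Real.sin (((M : ℝ) + 1) * θ) * Real.cos θ - Real.sin ((M : ℝ) * θ) =
      Real.sin θ * Real.cos (((M : ℝ) + 1) * θ) := by
    have h : (M : ℝ) * θ = ((M : ℝ) + 1) * θ - θ := by ring
    rw [h, Real.sin_sub]
    ring
  have ha' : ((a : ℝ) : ℂ) ≠ 0 := Complex.ofReal_ne_zero.mpr ha.ne'
  have ha1 : ((a + 1 : ℝ) : ℂ) ≠ 0 := Complex.ofReal_ne_zero.mpr (by positivity)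
  have h1 : ((Real.sin θ : ℝ) : ℂ) ≠ 0 := Complex.ofReal_ne_zero.mpr hs1.ne'
  have hsMne : ((Real.sin ((M : ℝ) * θ) : ℝ) : ℂ) ≠ 0 := Complex.ofReal_ne_zero.mpr hsM.ne'
  have hC : (((a + 1 : ℝ) : ℂ)) ^ (M + 1) * (((a : ℝ) : ℂ) ^ M)⁻¹ * ((xParam M a θ : ℝ) : ℂ) =
      ((Real.sin (((M : ℝ) + 1) * θ) : ℝ) : ℂ) ^ (M + 1) /
        (((Real.sin θ : ℝ) : ℂ) * ((Real.sin ((M : ℝ) * θ) : ℝ) : ℂ) ^ M) := by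
    unfold xParam
    simp only [Complex.ofReal_div, Complex.ofReal_mul, Complex.ofReal_pow]
    generalize ((Real.sin θ : ℝ) : ℂ) = S1 at h1 ⊢
    generalize ((Real.sin ((M : ℝ) * θ) : ℝ) : ℂ) = SM at hsMne ⊢
    generalize ((Real.sin (((M : ℝ) + 1) * θ) : ℝ) : ℂ) = SM1
    generalize ((a : ℝ) : ℂ) = A at ha' ⊢
    generalize ((a + 1 : ℝ) : ℂ) = B at ha1 ⊢
    field_simp
  have hA' : ((Real.sin (((M : ℝ) + 1) * θ) : ℝ) : ℂ) * ((Real.cos θ : ℝ) : ℂ) -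
      ((Real.sin ((M : ℝ) * θ) : ℝ) : ℂ) =
      ((Real.sin θ : ℝ) : ℂ) * ((Real.cos (((M : ℝ) + 1) * θ) : ℝ) : ℂ) := by
    exact_mod_cast congrArg (Complex.ofReal) hA
  have keyP : ((Real.sin (((M : ℝ) + 1) * θ) : ℝ) : ℂ) * Complex.exp (I * (θ : ℂ)) -
      ((Real.sin ((M : ℝ) * θ) : ℝ) : ℂ) =
      ((Real.sin θ : ℝ) : ℂ) * Complex.exp (I * (θ : ℂ)) ^ (M + 1) := by
    have e1 : Complex.exp (I * (θ : ℂ)) ^ (M + 1) =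
        Complex.exp (((((M : ℝ) + 1) * θ : ℝ) : ℂ) * I) := by
      rw [← Complex.exp_nat_mul]
      congr 1
      push_cast
      ring
    rw [e1, Complex.exp_mul_I, show I * (θ : ℂ) = ((θ : ℝ) : ℂ) * I from mul_comm _ _,
      Complex.exp_mul_I]
    simp only [← Complex.ofReal_cos, ← Complex.ofReal_sin]
    linear_combination hA'
  have keyM : ((Real.sin (((M : ℝ) + 1) * θ) : ℝ) : ℂ) * Complex.exp (-(I * (θ : ℂ))) -
      ((Real.sin ((M : ℝ) * θ) : ℝ) : ℂ) =
      ((Real.sin θ : ℝ) : ℂ) * Complex.exp (-(I * (θ : ℂ))) ^ (M + 1) := by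
    have e1 : Complex.exp (-(I * (θ : ℂ))) ^ (M + 1) =
        Complex.exp (((-(((M : ℝ) + 1) * θ) : ℝ) : ℂ) * I) := by
      rw [← Complex.exp_nat_mul]
      congr 1
      push_cast
      ring
    rw [e1, Complex.exp_mul_I, show -(I * (θ : ℂ)) = ((-θ : ℝ) : ℂ) * I by push_cast; ring,
      Complex.exp_mul_I]
    simp only [Complex.cos_neg, Complex.sin_neg, ← Complex.ofReal_cos, ← Complex.ofReal_sin,
      Real.cos_neg, Real.sin_neg, Complex.ofReal_neg]
    linear_combination hA'
  constructor
  · unfold Vplus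
    rw [show (((a + 1 : ℝ) : ℂ)) ^ (M + 1) * (((a : ℝ) : ℂ) ^ M)⁻¹ *
        (((Real.sin (((M : ℝ) + 1) * θ) / Real.sin ((M : ℝ) * θ) : ℝ) : ℂ) *
          Complex.exp (I * (θ : ℂ)) - 1) * ((xParam M a θ : ℝ) : ℂ) =
        (((a + 1 : ℝ) : ℂ)) ^ (M + 1) * (((a : ℝ) : ℂ) ^ M)⁻¹ * ((xParam M a θ : ℝ) : ℂ) *
        (((Real.sin (((M : ℝ) + 1) * θ) / Real.sin ((M : ℝ) * θ) : ℝ) : ℂ) *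
          Complex.exp (I * (θ : ℂ)) - 1) by ring, hC]
    exact solve_aux M _ _ _ hs1.ne' hsM.ne' _ keyP
  · unfold Vminus
    rw [show (((a + 1 : ℝ) : ℂ)) ^ (M + 1) * (((a : ℝ) : ℂ) ^ M)⁻¹ *
        (((Real.sin (((M : ℝ) + 1) * θ) / Real.sin ((M : ℝ) * θ) : ℝ) : ℂ) *
          Complex.exp (-(I * (θ : ℂ))) - 1) * ((xParam M a θ : ℝ) : ℂ) =
        (((a + 1 : ℝ) : ℂ)) ^ (M + 1) * (((a : ℝ) : ℂ) ^ M)⁻¹ * ((xParam M a θ : ℝ) : ℂ) *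
        (((Real.sin (((M : ℝ) + 1) * θ) / Real.sin ((M : ℝ) * θ) : ℝ) : ℂ) *
          Complex.exp (-(I * (θ : ℂ))) - 1) by ring, hC]
    exact solve_aux M _ _ _ hs1.ne' hsM.ne' _ keyM
end
end

section
/- Let M be a positive integer, a > 0 a real number, and θ ∈ (0, π/(M+1)). Set x(θ) = a^M sin^{M+1}((M+1)θ) / ( (a+1)^{M+1} sin θ · sin^M(Mθ) ) and ζ(θ) = sin((M+1)θ) e^{iθ} / ( (a+1) sin(Mθ) − a sin((M+1)θ) e^{iθ} ). Then ζ(θ)^{M+1} = ( ζ(θ) − 1 ) ( ζ(θ) + 1/a )^M x(θ). -/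
open Complex

noncomputable section

/-- The curve `ζ(θ)`. -/
def zetaCurve (M : ℕ) (a θ : ℝ) : ℂ :=
  (Real.sin (((M : ℝ) + 1) * θ) : ℂ) * Complex.exp (I * (θ : ℂ)) /
    (((a + 1) * Real.sin ((M : ℝ) * θ) : ℝ) -
      ((a * Real.sin (((M : ℝ) + 1) * θ) : ℝ) : ℂ) * Complex.exp (I * (θ : ℂ)))

lemma sin_ofReal_eq (t : ℝ) :
    ((Real.sin t : ℝ) : ℂ) = (Complex.exp (I * t) - Complex.exp (-(I * t))) / (2 * I) := by
  rw [Complex.ofReal_sin, Complex.sin]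
  rw [show (-(I * (t:ℂ))) = -t * I by ring, show (I * (t:ℂ)) = t * I by ring]
  field_simp
  linear_combination (Complex.exp (-((t:ℂ) * I)) - Complex.exp ((t:ℂ) * I)) * Complex.I_sq

/-- **`ζ(θ)` satisfies the fixed-point equation**
`ζ^{M+1} = (ζ-1)(ζ+1/a)^M x(θ)`. -/
theorem zeta_solves_fixed_point_equation
    (M : ℕ) (hM : 0 < M) (a : ℝ) (ha : 0 < a)
    (θ : ℝ) (hθ : θ ∈ Set.Ioo (0 : ℝ) (Real.pi / ((M : ℝ) + 1))) :
    zetaCurve M a θ ^ (M + 1) =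
      (zetaCurve M a θ - 1) * (zetaCurve M a θ + 1 / ((a : ℝ) : ℂ)) ^ M *
        ((xParam M a θ : ℝ) : ℂ) := by
  obtain ⟨hθ0, hθπ⟩ := hθ
  have hM1 : (0:ℝ) < (M:ℝ) + 1 := by positivity
  have hMpos : (0:ℝ) < (M:ℝ) := by exact_mod_cast hM
  have h1π : ((M:ℝ) + 1) * θ < Real.pi := by
    rw [mul_comm]; exact (lt_div_iff₀ hM1).mp hθπ
  have hS : 0 < Real.sin θ :=
    Real.sin_pos_of_pos_of_lt_pi hθ0 (by nlinarith)
  have hS1 : 0 < Real.sin (((M:ℝ) + 1) * θ) :=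
    Real.sin_pos_of_pos_of_lt_pi (by positivity) h1π
  have hSM : 0 < Real.sin ((M:ℝ) * θ) :=
    Real.sin_pos_of_pos_of_lt_pi (by positivity) (by nlinarith)
  set u : ℂ := Complex.exp (I * (θ:ℂ)) with hu_def
  have hu : u ≠ 0 := Complex.exp_ne_zero _
  set A : ℂ := (a : ℂ) with hA_def
  set S1 : ℂ := ((Real.sin (((M:ℝ) + 1) * θ) : ℝ) : ℂ) with hS1_def
  set SM : ℂ := ((Real.sin ((M:ℝ) * θ) : ℝ) : ℂ) with hSM_def
  set S : ℂ := ((Real.sin θ : ℝ) : ℂ) with hS_def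
  have hA : A ≠ 0 := by simp [hA_def, ha.ne']
  have hA1 : A + 1 ≠ 0 := by
    rw [hA_def, show ((a:ℂ) + 1) = ((a + 1 : ℝ) : ℂ) by push_cast; ring]
    exact_mod_cast (by positivity : (a:ℝ) + 1 ≠ 0)
  have hS' : S ≠ 0 := Complex.ofReal_ne_zero.mpr hS.ne'
  have hS1' : S1 ≠ 0 := Complex.ofReal_ne_zero.mpr hS1.ne'
  have hSM' : SM ≠ 0 := Complex.ofReal_ne_zero.mpr hSM.ne'
  -- key exponential facts
  have hexpM1 : Complex.exp (I * ((((M:ℝ) + 1) * θ : ℝ) : ℂ)) = u ^ (M + 1) := by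
    rw [hu_def, ← Complex.exp_nat_mul]
    congr 1
    push_cast
    ring
  have hexpM : Complex.exp (I * (((M:ℝ) * θ : ℝ) : ℂ)) = u ^ M := by
    rw [hu_def, ← Complex.exp_nat_mul]
    congr 1
    push_cast
    ring
  -- key identity : S1 * u = SM + S * u^(M+1)
  have hkey : S1 * u = SM + S * u ^ (M + 1) := by
    rw [hS1_def, hSM_def, hS_def, sin_ofReal_eq, sin_ofReal_eq, sin_ofReal_eq,
      Complex.exp_neg, Complex.exp_neg, Complex.exp_neg, hexpM1, hexpM]
    rw [show Complex.exp (I * (θ:ℂ)) = u from rfl]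
    have h2I : (2 : ℂ) * I ≠ 0 := by simp [Complex.I_ne_zero]
    field_simp
    ring
  -- denominator nonzero
  set D : ℂ := (((a + 1) * Real.sin ((M:ℝ) * θ) : ℝ) : ℂ) -
      ((a * Real.sin (((M:ℝ) + 1) * θ) : ℝ) : ℂ) * u with hD_def
  have huim : u.im = Real.sin θ := by
    rw [hu_def]
    simp [Complex.exp_im]
  have hD : D ≠ 0 := by
    intro h
    have him := congrArg Complex.im h
    rw [hD_def] at him
    simp only [Complex.sub_im, Complex.mul_im, Complex.ofReal_im, Complex.ofReal_re,
      Complex.zero_im, huim] at him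
    nlinarith [mul_pos (mul_pos ha hS1) hS]
  have hDexp : D = (A + 1) * SM - A * S1 * u := by
    rw [hD_def, hS1_def, hSM_def, hA_def]; push_cast; ring
  -- zeta expressions
  have hzeta : zetaCurve M a θ = S1 * u / D := by
    rw [zetaCurve, hD_def, hS1_def, hu_def]
  have h1 : zetaCurve M a θ - 1 = (A + 1) * S * u ^ (M + 1) / D := by
    rw [hzeta, div_sub_one hD]
    congr 1
    rw [hDexp]
    linear_combination (A + 1) * hkey
  have h2 : zetaCurve M a θ + 1 / ((a:ℝ) : ℂ) = (A + 1) * SM / (A * D) := by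
    rw [hzeta, ← hA_def, div_add_div _ _ hD hA]
    rw [show D * A = A * D by ring]
    congr 1
    rw [hDexp]
    ring
  have hx : ((xParam M a θ : ℝ) : ℂ) =
      A ^ M * S1 ^ (M + 1) / ((A + 1) ^ (M + 1) * S * SM ^ M) := by
    rw [xParam, hA_def, hS1_def, hSM_def, hS_def]
    push_cast
    ring
  rw [← hA_def] at h2
  clear_value u A S1 SM S D
  rw [h1, h2, hx, hzeta]
  rw [div_pow, div_pow, div_mul_div_comm, div_mul_div_comm]
  rw [div_eq_div_iff (pow_ne_zero _ hD)
    (mul_ne_zero (mul_ne_zero hD (pow_ne_zero _ (mul_ne_zero hA hD)))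
      (mul_ne_zero (mul_ne_zero (pow_ne_zero _ hA1) hS') (pow_ne_zero _ hSM')))]
  simp only [mul_pow]
  ring
end
end

section
/- Let M be a positive integer, a > 0 a real number, and θ ∈ (0, π/(M+1)). Set x(θ) = a^M sin^{M+1}((M+1)θ) / ( (a+1)^{M+1} sin θ · sin^M(Mθ) ) and V_+(θ) = ( sin((M+1)θ)/sin(Mθ) ) e^{iθ}. Then (a+1) − a V_+(θ) ≠ 0, and (1/(π x(θ))) · Im( V_+(θ) / ( (a+1) − a V_+(θ) ) ) = (a+1)^{M+2} sin^{M+1}(Mθ) sin²θ / ( π a^M sin^M((M+1)θ) [ (a+1)² sin²(Mθ) sin²θ + ( a cos(Mθ) sin θ − sin(Mθ) cos θ )² ] ); in particular this quantity is strictly positive. -/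
open Complex

noncomputable section

/-- **Parameterized formula for the limiting density.** -/
theorem density_parameterization
    (M : ℕ) (hM : 0 < M) (a : ℝ) (ha : 0 < a)
    (θ : ℝ) (hθ : θ ∈ Set.Ioo (0 : ℝ) (Real.pi / ((M : ℝ) + 1))) :
    ((a + 1 : ℝ) : ℂ) - (a : ℂ) * Vplus M θ ≠ 0 ∧
    (1 / (Real.pi * xParam M a θ)) *
        (Vplus M θ / (((a + 1 : ℝ) : ℂ) - (a : ℂ) * Vplus M θ)).im =
      (a + 1) ^ (M + 2) * Real.sin ((M : ℝ) * θ) ^ (M + 1) * Real.sin θ ^ 2 /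
        (Real.pi * a ^ M * Real.sin (((M : ℝ) + 1) * θ) ^ M *
          ((a + 1) ^ 2 * Real.sin ((M : ℝ) * θ) ^ 2 * Real.sin θ ^ 2 +
            (a * Real.cos ((M : ℝ) * θ) * Real.sin θ -
              Real.sin ((M : ℝ) * θ) * Real.cos θ) ^ 2)) ∧
    0 < (1 / (Real.pi * xParam M a θ)) *
        (Vplus M θ / (((a + 1 : ℝ) : ℂ) - (a : ℂ) * Vplus M θ)).im := by
  obtain ⟨hθ0, hθπ⟩ := hθ
  have hM1 : (0:ℝ) < (M:ℝ) + 1 := by positivity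
  have hMR : (1:ℝ) ≤ (M:ℝ) := by exact_mod_cast hM
  have hθπ' : ((M:ℝ) + 1) * θ < Real.pi := by
    have := (lt_div_iff₀ hM1).mp hθπ; linarith [this]
  have hsM1 : 0 < Real.sin (((M:ℝ) + 1) * θ) :=
    Real.sin_pos_of_pos_of_lt_pi (by positivity) hθπ'
  have hMθ0 : 0 < (M:ℝ) * θ := by nlinarith
  have hMθπ : (M:ℝ) * θ < Real.pi := by nlinarith
  have hsM : 0 < Real.sin ((M:ℝ) * θ) := Real.sin_pos_of_pos_of_lt_pi hMθ0 hMθπ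
  have hs1 : 0 < Real.sin θ := Real.sin_pos_of_pos_of_lt_pi hθ0 (by nlinarith)
  have hπ : 0 < Real.pi := Real.pi_pos
  have hadd : Real.sin (((M:ℝ) + 1) * θ) =
      Real.sin ((M:ℝ) * θ) * Real.cos θ + Real.cos ((M:ℝ) * θ) * Real.sin θ := by
    rw [show ((M:ℝ) + 1) * θ = (M:ℝ) * θ + θ by ring, Real.sin_add]
  set s1 := Real.sin θ
  set c1 := Real.cos θ
  set sM := Real.sin ((M:ℝ) * θ)
  set cM := Real.cos ((M:ℝ) * θ)
  set sM1 := Real.sin (((M:ℝ) + 1) * θ)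
  set Q := (a + 1) ^ 2 * sM ^ 2 * s1 ^ 2 + (a * cM * s1 - sM * c1) ^ 2 with hQdef
  have hV : Vplus M θ = ((sM1 / sM * c1 : ℝ) : ℂ) + ((sM1 / sM * s1 : ℝ) : ℂ) * I := by
    rw [Vplus, mul_comm I, Complex.exp_mul_I, ← Complex.ofReal_cos, ← Complex.ofReal_sin]
    simp only [Complex.ofReal_mul, Complex.ofReal_div]
    ring
  have hVre : (Vplus M θ).re = sM1 / sM * c1 := by simp [hV]
  have hVim : (Vplus M θ).im = sM1 / sM * s1 := by simp [hV]
  have hDre : (((a + 1 : ℝ) : ℂ) - (a : ℂ) * Vplus M θ).re = (a + 1) - a * (sM1 / sM * c1) := by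
    simp [hV]
  have hDim : (((a + 1 : ℝ) : ℂ) - (a : ℂ) * Vplus M θ).im = -(a * (sM1 / sM * s1)) := by
    simp [hV]
  have hD : ((a + 1 : ℝ) : ℂ) - (a : ℂ) * Vplus M θ ≠ 0 := by
    intro h
    rw [h, Complex.zero_im] at hDim
    have hpos : 0 < a * (sM1 / sM * s1) := by positivity
    linarith [hDim]
  have hQ : 0 < Q := by
    have h1 : 0 < (a + 1) ^ 2 * sM ^ 2 * s1 ^ 2 := by positivity
    have h2 : 0 ≤ (a * cM * s1 - sM * c1) ^ 2 := sq_nonneg _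
    rw [hQdef]; linarith
  have key : ((a + 1) * sM - a * sM1 * c1) ^ 2 + (a * sM1 * s1) ^ 2 = Q := by
    rw [hQdef, hadd]
    linear_combination (2 * a^2 * cM * sM * c1 * s1 + a^2 * cM^2 * s1^2 + a^2 * sM^2 * c1^2
      - (a+1)^2 * sM^2) * Real.sin_sq_add_cos_sq θ
  have hnormsq : Complex.normSq (((a + 1 : ℝ) : ℂ) - (a : ℂ) * Vplus M θ) = Q / sM ^ 2 := by
    rw [Complex.normSq_apply, hDre, hDim, ← key]
    field_simp
  have him : (Vplus M θ / (((a + 1 : ℝ) : ℂ) - (a : ℂ) * Vplus M θ)).im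
      = (a + 1) * sM1 * sM * s1 / Q := by
    rw [Complex.div_im, hnormsq, hVre, hVim, hDre, hDim]
    field_simp
    ring
  refine ⟨hD, ?_, ?_⟩
  · rw [him, xParam]
    rw [show Real.sin (((M:ℝ) + 1) * θ) = sM1 from rfl, show Real.sin ((M:ℝ) * θ) = sM from rfl,
      show Real.sin θ = s1 from rfl]
    field_simp
    ring
  · rw [him]
    have hx : 0 < xParam M a θ := by rw [xParam]; positivity
    positivity
end
end

section
/- For every real constant c with 0 < c < 1, the function θ ↦ sin θ / sin(cθ) is strictly decreasing on the open interval (0, π). -/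
open Real Set

private lemma sin_cmul_pos (c : ℝ) (hc0 : 0 < c) (hc1 : c < 1) {θ : ℝ}
    (h : θ ∈ Set.Ioo 0 Real.pi) : 0 < Real.sin (c * θ) := by
  apply Real.sin_pos_of_pos_of_lt_pi
  · exact mul_pos hc0 h.1
  · calc c * θ < 1 * θ := by nlinarith [h.1]
      _ = θ := one_mul θ
      _ < Real.pi := h.2

private lemma g_hasDerivAt (c θ : ℝ) :
    HasDerivAt (fun x : ℝ => Real.cos x * Real.sin (c * x)
        - c * (Real.sin x * Real.cos (c * x)))
      ((c ^ 2 - 1) * (Real.sin θ * Real.sin (c * θ))) θ := by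
  have hcm : HasDerivAt (fun x : ℝ => c * x) c θ := by
    simpa using (hasDerivAt_id θ).const_mul c
  have hs : HasDerivAt (fun x : ℝ => Real.sin (c * x)) (Real.cos (c * θ) * c) θ :=
    (Real.hasDerivAt_sin (c * θ)).comp θ hcm
  have hcos : HasDerivAt (fun x : ℝ => Real.cos (c * x)) (-Real.sin (c * θ) * c) θ :=
    (Real.hasDerivAt_cos (c * θ)).comp θ hcm
  have h1 : HasDerivAt (fun x : ℝ => Real.cos x * Real.sin (c * x))
      (-Real.sin θ * Real.sin (c * θ) + Real.cos θ * (Real.cos (c * θ) * c)) θ :=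
    (Real.hasDerivAt_cos θ).mul hs
  have h2 : HasDerivAt (fun x : ℝ => Real.sin x * Real.cos (c * x))
      (Real.cos θ * Real.cos (c * θ) + Real.sin θ * (-Real.sin (c * θ) * c)) θ :=
    (Real.hasDerivAt_sin θ).mul hcos
  have := h1.sub ((h2).const_mul c)
  refine this.congr_deriv ?_
  ring

private lemma g_neg (c : ℝ) (hc0 : 0 < c) (hc1 : c < 1) {θ : ℝ}
    (h : θ ∈ Set.Ioo 0 Real.pi) :
    Real.cos θ * Real.sin (c * θ) - c * (Real.sin θ * Real.cos (c * θ)) < 0 := by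
  set g : ℝ → ℝ := fun x => Real.cos x * Real.sin (c * x)
    - c * (Real.sin x * Real.cos (c * x)) with hg
  have hanti : StrictAntiOn g (Set.Icc 0 Real.pi) := by
    apply strictAntiOn_of_deriv_neg (convex_Icc 0 Real.pi)
    · exact Continuous.continuousOn (by fun_prop)
    · intro x hx
      rw [interior_Icc] at hx
      rw [(g_hasDerivAt c x).deriv]
      have hsx : 0 < Real.sin x := Real.sin_pos_of_pos_of_lt_pi hx.1 hx.2
      have hscx : 0 < Real.sin (c * x) := sin_cmul_pos c hc0 hc1 hx
      nlinarith [mul_pos (show (0:ℝ) < 1 - c^2 by nlinarith) (mul_pos hsx hscx)]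
  have h0 : g 0 = 0 := by simp [hg]
  have h2 := hanti (Set.left_mem_Icc.mpr Real.pi_pos.le)
    (Set.mem_Icc_of_Ioo h) h.1
  rw [h0] at h2
  simpa [hg] using h2

/-- **For `0 < c < 1`, the function `θ ↦ sin θ / sin(cθ)` is strictly
decreasing on `(0, π)`.** -/
theorem sin_div_sin_strictAntiOn (c : ℝ) (hc0 : 0 < c) (hc1 : c < 1) :
    StrictAntiOn (fun θ : ℝ => Real.sin θ / Real.sin (c * θ))
      (Set.Ioo 0 Real.pi) := by
  apply strictAntiOn_of_deriv_neg (convex_Ioo 0 Real.pi)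
  · apply ContinuousOn.div
    · exact Continuous.continuousOn (by fun_prop)
    · exact Continuous.continuousOn (by fun_prop)
    · intro x hx
      exact (sin_cmul_pos c hc0 hc1 hx).ne'
  · intro x hx
    rw [interior_Ioo] at hx
    have hsx : 0 < Real.sin x := Real.sin_pos_of_pos_of_lt_pi hx.1 hx.2
    have hscx : 0 < Real.sin (c * x) := sin_cmul_pos c hc0 hc1 hx
    have hcm : HasDerivAt (fun t : ℝ => c * t) c x := by
      simpa using (hasDerivAt_id x).const_mul c
    have hs : HasDerivAt (fun t : ℝ => Real.sin (c * t)) (Real.cos (c * x) * c) x :=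
      (Real.hasDerivAt_sin (c * x)).comp x hcm
    have hdiv : HasDerivAt (fun θ : ℝ => Real.sin θ / Real.sin (c * θ))
        ((Real.cos x * Real.sin (c * x) - Real.sin x * (Real.cos (c * x) * c))
          / Real.sin (c * x) ^ 2) x :=
      (Real.hasDerivAt_sin x).div hs hscx.ne'
    rw [hdiv.deriv]
    apply div_neg_of_neg_of_pos
    · have := g_neg c hc0 hc1 hx
      nlinarith
    · positivity
end

section
/- Let M be a positive integer and a > 0 a real number. The function x(θ) = a^M sin^{M+1}((M+1)θ) / ( (a+1)^{M+1} sin θ · sin^M(Mθ) ) is strictly decreasing on (0, π/(M+1)), with lim_{θ→0⁺} x(θ) = (M+1)^{M+1} a^M / ((a+1)^{M+1} M^M) =: x_* and lim_{θ→π/(M+1)⁻} x(θ) = 0; consequently θ ↦ x(θ) is a bijection from (0, π/(M+1)) onto (0, x_*). -/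
open Filter Real Set

noncomputable section

/-- The right spectral edge `x_*`. -/
def xstar (M : ℕ) (a : ℝ) : ℝ :=
  ((M : ℝ) + 1) ^ (M + 1) * a ^ M / ((a + 1) ^ (M + 1) * (M : ℝ) ^ M)

lemma hasDerivAt_sin_mul (c x : ℝ) :
    HasDerivAt (fun t => Real.sin (c * t)) (Real.cos (c * x) * c) x := by
  have h := (Real.hasDerivAt_sin (c * x)).comp x ((hasDerivAt_id x).const_mul c)
  simpa [Function.comp_def] using h

lemma hasDerivAt_cos_mul (c x : ℝ) :
    HasDerivAt (fun t => Real.cos (c * t)) (-Real.sin (c * x) * c) x := by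
  have h := (Real.hasDerivAt_cos (c * x)).comp x ((hasDerivAt_id x).const_mul c)
  simpa [Function.comp_def] using h

lemma sinRatio_strictAntiOn {c d : ℝ} (hd : 0 < d) (hdc : d < c) :
    StrictAntiOn (fun θ => Real.sin (c * θ) / Real.sin (d * θ))
      (Set.Ioo 0 (Real.pi / c)) := by
  have hc : 0 < c := hd.trans hdc
  have hpos : ∀ θ ∈ Set.Ioo 0 (Real.pi / c),
      0 < Real.sin (c * θ) ∧ 0 < Real.sin (d * θ) := by
    intro θ hθ
    obtain ⟨h0, h1⟩ := hθ
    have hcθ : c * θ < Real.pi := by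
      have := (lt_div_iff₀ hc).1 h1; nlinarith
    refine ⟨Real.sin_pos_of_pos_of_lt_pi (by positivity) hcθ,
      Real.sin_pos_of_pos_of_lt_pi (by positivity) (lt_of_le_of_lt (by nlinarith) hcθ)⟩
  set N : ℝ → ℝ := fun θ =>
    c * Real.cos (c * θ) * Real.sin (d * θ) - d * Real.sin (c * θ) * Real.cos (d * θ) with hN
  have hNderiv : ∀ θ : ℝ, HasDerivAt N
      ((d ^ 2 - c ^ 2) * (Real.sin (c * θ) * Real.sin (d * θ))) θ := by
    intro θ
    have h1 := (((hasDerivAt_cos_mul c θ).mul (hasDerivAt_sin_mul d θ)).const_mul c)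
    have h2 := (((hasDerivAt_sin_mul c θ).mul (hasDerivAt_cos_mul d θ)).const_mul d)
    have h3 : HasDerivAt (fun y => c * (Real.cos (c * y) * Real.sin (d * y)) -
        d * (Real.sin (c * y) * Real.cos (d * y))) _ θ := h1.sub h2
    convert h3 using 1
    · funext x; simp [hN]; ring
    · ring
  have hNanti : StrictAntiOn N (Set.Icc 0 (Real.pi / c)) := by
    apply strictAntiOn_of_deriv_neg (convex_Icc _ _)
    · exact Continuous.continuousOn (by fun_prop)
    · intro x hx
      rw [interior_Icc] at hx
      rw [(hNderiv x).deriv]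
      obtain ⟨hs1, hs2⟩ := hpos x hx
      have h4 : d ^ 2 - c ^ 2 < 0 := by nlinarith
      have h5 : 0 < Real.sin (c * x) * Real.sin (d * x) := mul_pos hs1 hs2
      exact mul_neg_of_neg_of_pos h4 h5
  have hNneg : ∀ θ ∈ Set.Ioo 0 (Real.pi / c), N θ < 0 := by
    intro θ hθ
    have h0 : N 0 = 0 := by simp [hN]
    have := hNanti (Set.left_mem_Icc.2 (by positivity)) ⟨le_of_lt hθ.1, le_of_lt hθ.2⟩ hθ.1
    rwa [h0] at this
  apply strictAntiOn_of_deriv_neg (convex_Ioo _ _)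
  · exact ContinuousOn.div (Continuous.continuousOn (by fun_prop))
      (Continuous.continuousOn (by fun_prop)) (fun θ hθ => (hpos θ hθ).2.ne')
  · intro x hx
    rw [interior_Ioo] at hx
    obtain ⟨hs1, hs2⟩ := hpos x hx
    have hD : HasDerivAt (fun θ => Real.sin (c * θ) / Real.sin (d * θ))
        (N x / (Real.sin (d * x)) ^ 2) x := by
      have : HasDerivAt (fun θ => Real.sin (c * θ) / Real.sin (d * θ)) _ x :=
        (hasDerivAt_sin_mul c x).div (hasDerivAt_sin_mul d x) hs2.ne'
      convert this using 1
      simp only [hN]; ring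
    rw [hD.deriv]
    exact div_neg_of_neg_of_pos (hNneg x hx) (by positivity)


lemma sines_pos (M : ℕ) (hM : 0 < M) {θ : ℝ}
    (hθ : θ ∈ Set.Ioo 0 (Real.pi / ((M : ℝ) + 1))) :
    0 < Real.sin θ ∧ 0 < Real.sin ((M : ℝ) * θ) ∧ 0 < Real.sin (((M : ℝ) + 1) * θ) := by
  have hM1 : (1 : ℝ) ≤ (M : ℝ) := by exact_mod_cast hM
  obtain ⟨h0, h1⟩ := hθ
  have hc : (0 : ℝ) < (M : ℝ) + 1 := by positivity
  have hcθ : ((M : ℝ) + 1) * θ < Real.pi := by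
    have := (lt_div_iff₀ hc).1 h1; nlinarith
  refine ⟨Real.sin_pos_of_pos_of_lt_pi h0 (by nlinarith),
    Real.sin_pos_of_pos_of_lt_pi (by positivity) (by nlinarith),
    Real.sin_pos_of_pos_of_lt_pi (by positivity) hcθ⟩

lemma xParam_eq (M : ℕ) (a θ : ℝ) (ha1 : a + 1 ≠ 0) (hs : Real.sin θ ≠ 0)
    (hsM : Real.sin ((M : ℝ) * θ) ≠ 0) :
    xParam M a θ = (a ^ M / (a + 1) ^ (M + 1)) *
      ((Real.sin (((M : ℝ) + 1) * θ) / Real.sin θ) *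
        (Real.sin (((M : ℝ) + 1) * θ) / Real.sin ((M : ℝ) * θ)) ^ M) := by
  unfold xParam
  rw [div_pow]
  field_simp
  ring

theorem xParam_strictAnti (M : ℕ) (hM : 0 < M) (a : ℝ) (ha : 0 < a) :
    StrictAntiOn (xParam M a) (Set.Ioo 0 (Real.pi / ((M : ℝ) + 1))) := by
  have hM1 : (1 : ℝ) ≤ (M : ℝ) := by exact_mod_cast hM
  have hf := sinRatio_strictAntiOn (c := (M : ℝ) + 1) (d := 1) one_pos (by linarith)
  have hg := sinRatio_strictAntiOn (c := (M : ℝ) + 1) (d := (M : ℝ))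
    (by linarith) (by linarith)
  simp only [one_mul] at hf
  intro θ1 h1 θ2 h2 h12
  have ha1 : a + 1 ≠ 0 := by positivity
  obtain ⟨s1, sM1, sP1⟩ := sines_pos M hM h1
  obtain ⟨s2, sM2, sP2⟩ := sines_pos M hM h2
  rw [xParam_eq M a θ1 ha1 s1.ne' sM1.ne', xParam_eq M a θ2 ha1 s2.ne' sM2.ne']
  have hc0 : 0 < a ^ M / (a + 1) ^ (M + 1) := by positivity
  have hff : Real.sin (((M : ℝ) + 1) * θ2) / Real.sin θ2
      < Real.sin (((M : ℝ) + 1) * θ1) / Real.sin θ1 := hf h1 h2 h12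
  have hgg : Real.sin (((M : ℝ) + 1) * θ2) / Real.sin ((M : ℝ) * θ2)
      < Real.sin (((M : ℝ) + 1) * θ1) / Real.sin ((M : ℝ) * θ1) := hg h1 h2 h12
  have hf2 : 0 ≤ Real.sin (((M : ℝ) + 1) * θ2) / Real.sin θ2 := le_of_lt (div_pos sP2 s2)
  have hg2 : 0 ≤ Real.sin (((M : ℝ) + 1) * θ2) / Real.sin ((M : ℝ) * θ2) :=
    le_of_lt (div_pos sP2 sM2)
  refine mul_lt_mul_of_pos_left ?_ hc0
  exact mul_lt_mul'' hff (pow_lt_pow_left₀ hgg hg2 hM.ne') hf2 (by positivity)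

lemma tendsto_sin_mul_div (c : ℝ) :
    Tendsto (fun θ => Real.sin (c * θ) / θ) (nhdsWithin 0 (Set.Ioi 0)) (nhds c) := by
  have h : HasDerivAt (fun t => Real.sin (c * t)) c 0 := by
    simpa using hasDerivAt_sin_mul c 0
  have h2 := hasDerivAt_iff_tendsto_slope.1 h
  have h3 : slope (fun t => Real.sin (c * t)) 0 = fun θ => Real.sin (c * θ) / θ := by
    funext y; simp [slope_def_field, div_eq_mul_inv]
  rw [h3] at h2
  exact h2.mono_left (nhdsWithin_mono _ (fun x hx => ne_of_gt hx))

theorem xParam_tendsto_zero (M : ℕ) (hM : 0 < M) (a : ℝ) (ha : 0 < a) :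
    Tendsto (xParam M a) (nhdsWithin 0 (Set.Ioi 0)) (nhds (xstar M a)) := by
  have hM1 : (1 : ℝ) ≤ (M : ℝ) := by exact_mod_cast hM
  have hppos : 0 < Real.pi / ((M : ℝ) + 1) := by positivity
  have hnum : Tendsto (fun θ => a ^ M * (Real.sin (((M : ℝ) + 1) * θ) / θ) ^ (M + 1))
      (nhdsWithin 0 (Set.Ioi 0)) (nhds (a ^ M * ((M : ℝ) + 1) ^ (M + 1))) :=
    tendsto_const_nhds.mul ((tendsto_sin_mul_div _).pow _)
  have hden : Tendsto (fun θ => (a + 1) ^ (M + 1) * (Real.sin θ / θ) *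
        (Real.sin ((M : ℝ) * θ) / θ) ^ M)
      (nhdsWithin 0 (Set.Ioi 0)) (nhds ((a + 1) ^ (M + 1) * 1 * (M : ℝ) ^ M)) := by
    refine (tendsto_const_nhds.mul ?_).mul ((tendsto_sin_mul_div _).pow _)
    have := tendsto_sin_mul_div 1
    simpa using this
  have hdne : (a + 1) ^ (M + 1) * 1 * (M : ℝ) ^ M ≠ 0 := by positivity
  have hlim := hnum.div hden hdne
  have hval : a ^ M * ((M : ℝ) + 1) ^ (M + 1) / ((a + 1) ^ (M + 1) * 1 * (M : ℝ) ^ M)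
      = xstar M a := by
    unfold xstar; ring
  rw [hval] at hlim
  refine hlim.congr' ?_
  filter_upwards [Ioo_mem_nhdsGT_of_mem (Set.left_mem_Ico.2 hppos)] with θ hθ
  obtain ⟨s, sM, sP⟩ := sines_pos M hM hθ
  have hθ0 : θ ≠ 0 := ne_of_gt hθ.1
  simp only [Pi.div_apply]
  unfold xParam
  rw [div_pow, div_pow]
  field_simp
  ring

theorem xParam_tendsto_pi (M : ℕ) (hM : 0 < M) (a : ℝ) (ha : 0 < a) :
    Tendsto (xParam M a)
      (nhdsWithin (Real.pi / ((M : ℝ) + 1)) (Set.Iio (Real.pi / ((M : ℝ) + 1))))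
      (nhds 0) := by
  have hM1 : (1 : ℝ) ≤ (M : ℝ) := by exact_mod_cast hM
  set p := Real.pi / ((M : ℝ) + 1) with hp
  have hc : (0 : ℝ) < (M : ℝ) + 1 := by positivity
  have hppos : 0 < p := by positivity
  have hMp : ((M : ℝ) + 1) * p = Real.pi := mul_div_cancel₀ _ hc.ne'
  have hplt : p < Real.pi := by
    rw [hp, div_lt_iff₀ hc]; nlinarith [Real.pi_pos]
  have hsp : 0 < Real.sin p := Real.sin_pos_of_pos_of_lt_pi hppos hplt
  have hMpeq : (M : ℝ) * p = Real.pi - p := by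
    have : (M : ℝ) * p = ((M : ℝ) + 1) * p - p := by ring
    rw [this, hMp]
  have hsMp : 0 < Real.sin ((M : ℝ) * p) := by
    rw [hMpeq, Real.sin_pi_sub]; exact hsp
  have hdne : (a + 1) ^ (M + 1) * Real.sin p * Real.sin ((M : ℝ) * p) ^ M ≠ 0 := by
    positivity
  have hcont : ContinuousAt (xParam M a) p := by
    unfold xParam
    exact ContinuousAt.div (by fun_prop) (by fun_prop) hdne
  have hval : xParam M a p = 0 := by
    unfold xParam
    rw [hMp, Real.sin_pi]
    simp
  have h := hcont.tendsto.mono_left (nhdsWithin_le_nhds (s := Set.Iio p))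
  rwa [hval] at h

/-- **`x(θ)` is a strictly decreasing bijection from `(0, π/(M+1))` onto
`(0, x_*)`, with the indicated boundary limits.** -/
theorem xParam_strictAnti_bijOn
    (M : ℕ) (hM : 0 < M) (a : ℝ) (ha : 0 < a) :
    StrictAntiOn (xParam M a) (Set.Ioo 0 (Real.pi / ((M : ℝ) + 1))) ∧
    Tendsto (xParam M a) (nhdsWithin 0 (Set.Ioi 0)) (nhds (xstar M a)) ∧
    Tendsto (xParam M a)
      (nhdsWithin (Real.pi / ((M : ℝ) + 1)) (Set.Iio (Real.pi / ((M : ℝ) + 1))))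
      (nhds 0) ∧
    Set.BijOn (xParam M a) (Set.Ioo 0 (Real.pi / ((M : ℝ) + 1)))
      (Set.Ioo 0 (xstar M a)) := by
  have hM1 : (1 : ℝ) ≤ (M : ℝ) := by exact_mod_cast hM
  set p := Real.pi / ((M : ℝ) + 1) with hp
  have hppos : 0 < p := by positivity
  have hanti := xParam_strictAnti M hM a ha
  have htend0 := xParam_tendsto_zero M hM a ha
  have htendp := xParam_tendsto_pi M hM a ha
  have hxpos : ∀ θ ∈ Set.Ioo 0 p, 0 < xParam M a θ := by
    intro θ hθ
    obtain ⟨s, sM, sP⟩ := sines_pos M hM hθ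
    unfold xParam
    positivity
  have hxlt : ∀ θ ∈ Set.Ioo 0 p, xParam M a θ < xstar M a := by
    intro θ hθ
    have hmid : θ / 2 ∈ Set.Ioo 0 p := ⟨by linarith [hθ.1], by linarith [hθ.1, hθ.2]⟩
    have h1 : xParam M a θ < xParam M a (θ / 2) :=
      hanti hmid hθ (by linarith [hθ.1])
    have h2 : xParam M a (θ / 2) ≤ xstar M a := by
      refine ge_of_tendsto htend0 ?_
      filter_upwards [Ioo_mem_nhdsGT_of_mem (Set.left_mem_Ico.2 hmid.1)] with θ' hθ'
      exact le_of_lt (hanti ⟨hθ'.1, lt_trans hθ'.2 hmid.2⟩ hmid hθ'.2)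
    linarith
  have hcontOn : ContinuousOn (xParam M a) (Set.Ioo 0 p) := by
    unfold xParam
    refine ContinuousOn.div (Continuous.continuousOn (by fun_prop))
      (Continuous.continuousOn (by fun_prop)) ?_
    intro θ hθ
    obtain ⟨s, sM, sP⟩ := sines_pos M hM hθ
    positivity
  refine ⟨hanti, htend0, htendp, fun θ hθ => ⟨hxpos θ hθ, hxlt θ hθ⟩, hanti.injOn, ?_⟩
  intro y hy
  obtain ⟨hy0, hyx⟩ := hy
  have h1 : ∀ᶠ θ' in nhdsWithin 0 (Set.Ioi 0), y < xParam M a θ' :=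
    htend0.eventually (eventually_gt_nhds hyx)
  have hmem1 : ∀ᶠ θ' in nhdsWithin 0 (Set.Ioi 0), θ' ∈ Set.Ioo 0 p :=
    Ioo_mem_nhdsGT_of_mem (Set.left_mem_Ico.2 hppos)
  obtain ⟨θ1, hθ1y, hθ1⟩ := (h1.and hmem1).exists
  have h2 : ∀ᶠ θ' in nhdsWithin p (Set.Iio p), xParam M a θ' < y :=
    htendp.eventually (eventually_lt_nhds hy0)
  have hmem2 : ∀ᶠ θ' in nhdsWithin p (Set.Iio p), θ' ∈ Set.Ioo θ1 p :=
    Ioo_mem_nhdsLT_of_mem (Set.right_mem_Ioc.2 hθ1.2)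
  obtain ⟨θ2, hθ2y, hθ2⟩ := (h2.and hmem2).exists
  have hθ2I : θ2 ∈ Set.Ioo 0 p := ⟨lt_trans hθ1.1 hθ2.1, hθ2.2⟩
  have hsub : Set.Icc θ1 θ2 ⊆ Set.Ioo 0 p := fun z hz =>
    ⟨lt_of_lt_of_le hθ1.1 hz.1, lt_of_le_of_lt hz.2 hθ2I.2⟩
  have hIVT := intermediate_value_Icc' (le_of_lt hθ2.1) (hcontOn.mono hsub)
  obtain ⟨θ, hθmem, hθeq⟩ := hIVT ⟨le_of_lt hθ2y, le_of_lt hθ1y⟩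
  exact ⟨θ, hsub hθmem, hθeq⟩
end
end

section
/- Let M be a positive integer and a a real number with 0 < a < M. Set z_0 = (M+1)/(M−a), x_* = (M+1)^{M+1} a^M / ((a+1)^{M+1} M^M), and for real z > 1 define F̂(z) = (M+1) z (log z − 1) − (z−1)(log(z−1) − 1) − M (z + 1/a)(log(z + 1/a) − 1) − z log x_*. Then z_0 > 1 and F̂ has at z_0 a critical point of exact order three: F̂'(z_0) = 0, F̂''(z_0) = 0, and F̂'''(z_0) = (M−a)^4 / ( M (M+1) (a+1)² ). -/
noncomputable section

/-- The real phase function `F̂(z) = F̂(z; x_*)`, for `z > 1`. -/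
def FhatReal (M : ℕ) (a z : ℝ) : ℝ :=
  ((M : ℝ) + 1) * z * (Real.log z - 1) - (z - 1) * (Real.log (z - 1) - 1) -
    (M : ℝ) * (z + 1 / a) * (Real.log (z + 1 / a) - 1) - z * Real.log (xstar M a)

open Real Filter

/-- First derivative helper. -/
def Gfun (M : ℕ) (a z : ℝ) : ℝ :=
  ((M : ℝ) + 1) * Real.log z - Real.log (z - 1) - (M : ℝ) * Real.log (z + 1 / a)
    - Real.log (xstar M a)

/-- Second derivative helper. -/
def G2fun (M : ℕ) (a z : ℝ) : ℝ :=
  ((M : ℝ) + 1) / z - 1 / (z - 1) - (M : ℝ) / (z + 1 / a)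

/-- Third derivative helper. -/
def G3fun (M : ℕ) (a z : ℝ) : ℝ :=
  -((M : ℝ) + 1) / z ^ 2 + 1 / (z - 1) ^ 2 + (M : ℝ) / (z + 1 / a) ^ 2

lemma hasDerivAt_Fhat (M : ℕ) (a : ℝ) (ha : 0 < a) (z : ℝ) (hz : 1 < z) :
    HasDerivAt (FhatReal M a) (Gfun M a z) z := by
  have hz0 : (0:ℝ) < z := by linarith
  have hz1 : (0:ℝ) < z - 1 := by linarith
  have hia : (0:ℝ) < 1 / a := by positivity
  have hza : (0:ℝ) < z + 1 / a := by linarith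
  have h1 : HasDerivAt (fun z : ℝ => ((M : ℝ) + 1) * z * (Real.log z - 1))
      (((M : ℝ) + 1) * 1 * (Real.log z - 1) + ((M : ℝ) + 1) * z * z⁻¹) z :=
    ((hasDerivAt_id z).const_mul ((M : ℝ) + 1)).mul
      ((Real.hasDerivAt_log hz0.ne').sub_const 1)
  have hl2 : HasDerivAt (fun z : ℝ => Real.log (z - 1)) ((z - 1)⁻¹ * 1) z :=
    (Real.hasDerivAt_log hz1.ne').comp (h₂ := Real.log) z ((hasDerivAt_id z).sub_const 1)
  have h2 : HasDerivAt (fun z : ℝ => (z - 1) * (Real.log (z - 1) - 1))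
      (1 * (Real.log (z - 1) - 1) + (z - 1) * ((z - 1)⁻¹ * 1)) z :=
    ((hasDerivAt_id z).sub_const 1).mul (hl2.sub_const 1)
  have hl3 : HasDerivAt (fun z : ℝ => Real.log (z + 1 / a)) ((z + 1 / a)⁻¹ * 1) z :=
    (Real.hasDerivAt_log hza.ne').comp (h₂ := Real.log) z ((hasDerivAt_id z).add_const (1 / a))
  have h3 : HasDerivAt (fun z : ℝ => (M : ℝ) * (z + 1 / a) * (Real.log (z + 1 / a) - 1))
      ((M : ℝ) * 1 * (Real.log (z + 1 / a) - 1) + (M : ℝ) * (z + 1 / a) * ((z + 1 / a)⁻¹ * 1)) z := by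
    have := (((hasDerivAt_id z).add_const (1 / a)).const_mul (M : ℝ)).mul (hl3.sub_const 1)
    exact this
  have h4 : HasDerivAt (fun z : ℝ => z * Real.log (xstar M a)) (Real.log (xstar M a)) z := by
    simpa using (hasDerivAt_id z).mul_const (Real.log (xstar M a))
  have H := ((h1.sub h2).sub h3).sub h4
  have : FhatReal M a = fun z : ℝ =>
      ((M : ℝ) + 1) * z * (Real.log z - 1) - (z - 1) * (Real.log (z - 1) - 1) -
        (M : ℝ) * (z + 1 / a) * (Real.log (z + 1 / a) - 1) - z * Real.log (xstar M a) := rfl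
  rw [this]
  refine H.congr_deriv ?_
  unfold Gfun
  field_simp
  ring

lemma hasDerivAt_G (M : ℕ) (a : ℝ) (ha : 0 < a) (z : ℝ) (hz : 1 < z) :
    HasDerivAt (Gfun M a) (G2fun M a z) z := by
  have hz0 : (0:ℝ) < z := by linarith
  have hz1 : (0:ℝ) < z - 1 := by linarith
  have hia : (0:ℝ) < 1 / a := by positivity
  have hza : (0:ℝ) < z + 1 / a := by linarith
  have h1 := (Real.hasDerivAt_log hz0.ne').const_mul ((M : ℝ) + 1)
  have h2 : HasDerivAt (fun z : ℝ => Real.log (z - 1)) ((z - 1)⁻¹ * 1) z :=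
    (Real.hasDerivAt_log hz1.ne').comp (h₂ := Real.log) z ((hasDerivAt_id z).sub_const 1)
  have h3 : HasDerivAt (fun z : ℝ => (M : ℝ) * Real.log (z + 1 / a))
      ((M : ℝ) * ((z + 1 / a)⁻¹ * 1)) z :=
    ((Real.hasDerivAt_log hza.ne').comp (h₂ := Real.log) z ((hasDerivAt_id z).add_const (1 / a))).const_mul (M : ℝ)
  have H := (((h1.sub h2).sub h3).sub_const (Real.log (xstar M a)))
  have : Gfun M a = fun z : ℝ =>
      ((M : ℝ) + 1) * Real.log z - Real.log (z - 1) - (M : ℝ) * Real.log (z + 1 / a)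
        - Real.log (xstar M a) := rfl
  rw [this]
  refine H.congr_deriv ?_
  unfold G2fun
  field_simp

lemma hasDerivAt_G2 (M : ℕ) (a : ℝ) (ha : 0 < a) (z : ℝ) (hz : 1 < z) :
    HasDerivAt (G2fun M a) (G3fun M a z) z := by
  have hz0 : (0:ℝ) < z := by linarith
  have hz1 : (0:ℝ) < z - 1 := by linarith
  have hia : (0:ℝ) < 1 / a := by positivity
  have hza : (0:ℝ) < z + 1 / a := by linarith
  have h1 : HasDerivAt (fun z : ℝ => ((M : ℝ) + 1) / z) (((M : ℝ) + 1) * (-(z ^ 2)⁻¹)) z := by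
    simpa [div_eq_mul_inv] using (hasDerivAt_inv hz0.ne').const_mul ((M : ℝ) + 1)
  have h2 : HasDerivAt (fun z : ℝ => 1 / (z - 1)) (1 * (-((z - 1) ^ 2)⁻¹ * 1)) z := by
    have := ((hasDerivAt_inv hz1.ne').comp z ((hasDerivAt_id z).sub_const 1)).const_mul (1 : ℝ)
    simpa [div_eq_mul_inv, one_mul] using this
  have h3 : HasDerivAt (fun z : ℝ => (M : ℝ) / (z + 1 / a)) ((M : ℝ) * (-((z + 1 / a) ^ 2)⁻¹ * 1)) z := by
    have := ((hasDerivAt_inv hza.ne').comp z ((hasDerivAt_id z).add_const (1 / a))).const_mul (M : ℝ)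
    simpa [div_eq_mul_inv] using this
  have H := (h1.sub h2).sub h3
  have : G2fun M a = fun z : ℝ =>
      ((M : ℝ) + 1) / z - 1 / (z - 1) - (M : ℝ) / (z + 1 / a) := rfl
  rw [this]
  refine H.congr_deriv ?_
  unfold G3fun
  field_simp
  ring

/-- **`z₀ = (M+1)/(M-a)` is a critical point of `F̂` of exact order three.** -/
theorem Fhat_critical_point_order_three
    (M : ℕ) (hM : 0 < M) (a : ℝ) (ha : 0 < a) (haM : a < (M : ℝ)) :
    1 < ((M : ℝ) + 1) / ((M : ℝ) - a) ∧
    deriv (FhatReal M a) (((M : ℝ) + 1) / ((M : ℝ) - a)) = 0 ∧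
    deriv (deriv (FhatReal M a)) (((M : ℝ) + 1) / ((M : ℝ) - a)) = 0 ∧
    deriv (deriv (deriv (FhatReal M a))) (((M : ℝ) + 1) / ((M : ℝ) - a)) =
      ((M : ℝ) - a) ^ 4 / ((M : ℝ) * ((M : ℝ) + 1) * (a + 1) ^ 2) := by
  have hm : (0:ℝ) < (M : ℝ) := by exact_mod_cast hM
  have hma : (0:ℝ) < (M : ℝ) - a := by linarith
  have hm1 : (0:ℝ) < (M : ℝ) + 1 := by linarith
  have ha1 : (0:ℝ) < a + 1 := by linarith
  set z₀ : ℝ := ((M : ℝ) + 1) / ((M : ℝ) - a) with hz₀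
  have h1 : 1 < z₀ := by
    rw [hz₀, lt_div_iff₀ hma]; linarith
  have e1 : z₀ - 1 = (a + 1) / ((M : ℝ) - a) := by
    rw [hz₀]; field_simp; ring
  have e2 : z₀ + 1 / a = ((M : ℝ) * (a + 1)) / (a * ((M : ℝ) - a)) := by
    rw [hz₀]; field_simp; ring
  -- eventual equalities
  have ev : ∀ᶠ z in nhds z₀, 1 < z := eventually_gt_nhds h1
  have eF : deriv (FhatReal M a) =ᶠ[nhds z₀] Gfun M a :=
    ev.mono fun z hz => (hasDerivAt_Fhat M a ha z hz).deriv
  have eG : deriv (Gfun M a) =ᶠ[nhds z₀] G2fun M a :=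
    ev.mono fun z hz => (hasDerivAt_G M a ha z hz).deriv
  have eFF : deriv (deriv (FhatReal M a)) =ᶠ[nhds z₀] G2fun M a := eF.deriv.trans eG
  -- value of G at z₀
  have hGz : Gfun M a z₀ = 0 := by
    have lz : Real.log z₀ = Real.log ((M : ℝ) + 1) - Real.log ((M : ℝ) - a) := by
      rw [hz₀, Real.log_div hm1.ne' hma.ne']
    have lz1 : Real.log (z₀ - 1) = Real.log (a + 1) - Real.log ((M : ℝ) - a) := by
      rw [e1, Real.log_div ha1.ne' hma.ne']
    have lz2 : Real.log (z₀ + 1 / a) =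
        Real.log (M : ℝ) + Real.log (a + 1) - (Real.log a + Real.log ((M : ℝ) - a)) := by
      rw [e2, Real.log_div (by positivity) (by positivity), Real.log_mul hm.ne' ha1.ne',
        Real.log_mul ha.ne' hma.ne']
    have lx : Real.log (xstar M a) =
        ((M : ℝ) + 1) * Real.log ((M : ℝ) + 1) + (M : ℝ) * Real.log a -
          (((M : ℝ) + 1) * Real.log (a + 1) + (M : ℝ) * Real.log (M : ℝ)) := by
      unfold xstar
      rw [Real.log_div (by positivity) (by positivity),
        Real.log_mul (by positivity) (by positivity),
        Real.log_mul (by positivity) (by positivity),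
        Real.log_pow, Real.log_pow, Real.log_pow, Real.log_pow]
      push_cast
      ring
    unfold Gfun
    rw [lz, lz1, lz2, lx]
    ring
  have hG2z : G2fun M a z₀ = 0 := by
    unfold G2fun
    rw [e1, e2, hz₀]
    field_simp
    ring
  have hG3z : G3fun M a z₀ = ((M : ℝ) - a) ^ 4 / ((M : ℝ) * ((M : ℝ) + 1) * (a + 1) ^ 2) := by
    unfold G3fun
    rw [e1, e2, hz₀]
    field_simp
    ring
  refine ⟨h1, ?_, ?_, ?_⟩
  · rw [(hasDerivAt_Fhat M a ha z₀ h1).deriv, hGz]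
  · rw [eF.deriv_eq, (hasDerivAt_G M a ha z₀ h1).deriv, hG2z]
  · rw [eFF.deriv_eq, (hasDerivAt_G2 M a ha z₀ h1).deriv, hG3z]
end
end
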